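/- arXiv:2511.00232 — 4 statements merged into one kernel-verified Lean document; each statement's English description precedes it below -/
import Mathlib

section
/- Fix b > a > 0 and let μ = (b/(a+b))δ_{-a} + (a/(a+b))δ_b, ν = (a/(a+b))δ_{-b} + (b/(a+b))δ_a on ℝ. Then the squared 2-Wasserstein distance between μ and ν equals 2a(b−a). -/
open MeasureTheory
open scoped ENNReal

/-- Squared quadratic Wasserstein distance, as the infimal transport cost over couplings. -/
noncomputable def W2sq {E : Type*} [NormedAddCommGroup E] [MeasurableSpace E]
    (μ ν : Measure E) : ℝ≥0∞ :=
  ⨅ (γ : Measure (E × E)) (_ : γ.map Prod.fst = μ) (_ : γ.map Prod.snd = ν),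
    ∫⁻ p, ENNReal.ofReal (‖p.1 - p.2‖ ^ 2) ∂γ

noncomputable def muAB (a b : ℝ) : Measure ℝ :=
  ENNReal.ofReal (b / (a + b)) • Measure.dirac (-a) +
    ENNReal.ofReal (a / (a + b)) • Measure.dirac b

noncomputable def nuAB (a b : ℝ) : Measure ℝ :=
  ENNReal.ofReal (a / (a + b)) • Measure.dirac (-b) +
    ENNReal.ofReal (b / (a + b)) • Measure.dirac a

theorem stmt7 (a b : ℝ) (ha : 0 < a) (hab : a < b) :
    W2sq (muAB a b) (nuAB a b) = ENNReal.ofReal (2 * a * (b - a)) := by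
  have hb : 0 < b := ha.trans hab
  have hs : 0 < a + b := by linarith
  have hdiv1 : (0:ℝ) ≤ a / (a + b) := by positivity
  have hdiv2 : (0:ℝ) ≤ (b - a) / (a + b) := div_nonneg (by linarith) (by linarith)
  have hdiv3 : (0:ℝ) ≤ b / (a + b) := by positivity
  have hne1 : ¬ (a:ℝ) = -b := by intro h; linarith
  have hne2 : ¬ (b:ℝ) = -a := by intro h; linarith
  set c1 : ℝ≥0∞ := ENNReal.ofReal (a / (a + b)) with hc1
  set c2 : ℝ≥0∞ := ENNReal.ofReal ((b - a) / (a + b)) with hc2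
  have hba : c1 + c2 = ENNReal.ofReal (b / (a + b)) := by
    rw [hc1, hc2, ← ENNReal.ofReal_add hdiv1 hdiv2]
    congr 1; field_simp; ring
  apply le_antisymm
  · -- upper bound via the monotone coupling
    set γ : Measure (ℝ × ℝ) :=
      c1 • Measure.dirac ((-a : ℝ), (-b : ℝ)) + c2 • Measure.dirac ((-a : ℝ), (a : ℝ))
        + c1 • Measure.dirac ((b : ℝ), (a : ℝ)) with hγ
    have hfst : γ.map Prod.fst = muAB a b := by
      rw [hγ, Measure.map_add _ _ measurable_fst, Measure.map_add _ _ measurable_fst,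
        Measure.map_smul, Measure.map_smul, Measure.map_smul,
        Measure.map_dirac' measurable_fst, Measure.map_dirac' measurable_fst,
        Measure.map_dirac' measurable_fst]
      simp only [muAB]
      rw [← hba, add_smul]
    have hsnd : γ.map Prod.snd = nuAB a b := by
      rw [hγ, Measure.map_add _ _ measurable_snd, Measure.map_add _ _ measurable_snd,
        Measure.map_smul, Measure.map_smul, Measure.map_smul,
        Measure.map_dirac' measurable_snd, Measure.map_dirac' measurable_snd,
        Measure.map_dirac' measurable_snd]
      simp only [nuAB]
      rw [← hba, add_smul]
      abel
    refine iInf_le_of_le γ (iInf_le_of_le hfst (iInf_le_of_le hsnd (le_of_eq ?_)))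
    rw [hγ, lintegral_add_measure, lintegral_add_measure, lintegral_smul_measure,
      lintegral_smul_measure, lintegral_smul_measure, lintegral_dirac, lintegral_dirac,
      lintegral_dirac]
    simp only [hc1, hc2, smul_eq_mul]
    rw [← ENNReal.ofReal_mul hdiv1, ← ENNReal.ofReal_mul hdiv2, ← ENNReal.ofReal_mul hdiv1,
      ← ENNReal.ofReal_add (mul_nonneg hdiv1 (by positivity)) (mul_nonneg hdiv2 (by positivity)),
      ← ENNReal.ofReal_add
        (add_nonneg (mul_nonneg hdiv1 (by positivity)) (mul_nonneg hdiv2 (by positivity)))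
        (mul_nonneg hdiv1 (by positivity))]
    congr 1
    rw [Real.norm_eq_abs, Real.norm_eq_abs, Real.norm_eq_abs, sq_abs, sq_abs, sq_abs]
    field_simp
    ring
  · -- lower bound via duality
    simp only [W2sq, le_iInf_iff]
    intro γ h1 h2
    -- γ is a probability measure
    have hγuniv : γ Set.univ = 1 := by
      have h : (γ.map Prod.fst) Set.univ = γ Set.univ := by
        rw [Measure.map_apply measurable_fst MeasurableSet.univ]; rfl
      rw [h1] at h
      rw [← h]
      simp only [muAB, Measure.coe_add, Pi.add_apply, Measure.coe_smul, Pi.smul_apply,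
        measure_univ, smul_eq_mul, mul_one]
      rw [← ENNReal.ofReal_add hdiv3 hdiv1]
      rw [show b / (a + b) + a / (a + b) = 1 by field_simp; ring]
      simp
    -- supports
    have hS : ∀ᵐ p ∂γ, p.1 = -a ∨ p.1 = b := by
      have hmeas : MeasurableSet ({-a, b} : Set ℝ) := by measurability
      have h : γ (Prod.fst ⁻¹' ({-a, b} : Set ℝ)ᶜ) = 0 := by
        rw [← Measure.map_apply measurable_fst hmeas.compl, h1]
        simp only [muAB, Measure.coe_add, Pi.add_apply, Measure.coe_smul, Pi.smul_apply,
          smul_eq_mul]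
        rw [Measure.dirac_apply' _ hmeas.compl, Measure.dirac_apply' _ hmeas.compl]
        rw [Set.indicator_of_notMem (by simp), Set.indicator_of_notMem (by simp)]
        simp
      refine (ae_iff.2 ?_)
      convert h using 2
      ext p; simp
    have hT : ∀ᵐ p ∂γ, p.2 = -b ∨ p.2 = a := by
      have hmeas : MeasurableSet ({-b, a} : Set ℝ) := by measurability
      have h : γ (Prod.snd ⁻¹' ({-b, a} : Set ℝ)ᶜ) = 0 := by
        rw [← Measure.map_apply measurable_snd hmeas.compl, h2]
        simp only [nuAB, Measure.coe_add, Pi.add_apply, Measure.coe_smul, Pi.smul_apply,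
          smul_eq_mul]
        rw [Measure.dirac_apply' _ hmeas.compl, Measure.dirac_apply' _ hmeas.compl]
        rw [Set.indicator_of_notMem (by simp), Set.indicator_of_notMem (by simp)]
        simp
      refine (ae_iff.2 ?_)
      convert h using 2
      ext p; simp
    -- dual potentials (shifted to be nonnegative)
    set F : ℝ → ℝ≥0∞ := fun x => ENNReal.ofReal (if x = -a then 4 * a ^ 2 else (b - a) ^ 2)
      with hF
    set G : ℝ → ℝ≥0∞ := fun y => ENNReal.ofReal (if y = -b then (b - a) ^ 2 else 4 * a ^ 2)
      with hG
    have hFmeas : Measurable F := by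
      apply Measurable.ennreal_ofReal
      exact Measurable.ite (measurableSet_eq) measurable_const measurable_const
    have hGmeas : Measurable G := by
      apply Measurable.ennreal_ofReal
      exact Measurable.ite (measurableSet_eq) measurable_const measurable_const
    -- pointwise a.e. inequality
    have hpt : ∀ᵐ p ∂γ, F p.1 + G p.2 ≤
        ENNReal.ofReal (‖p.1 - p.2‖ ^ 2) + ENNReal.ofReal (4 * a ^ 2) := by
      filter_upwards [hS, hT] with p hp1 hp2
      rw [hF, hG]
      rw [← ENNReal.ofReal_add (by positivity) (by positivity),
        ← ENNReal.ofReal_add (by positivity) (by positivity)]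
      apply ENNReal.ofReal_le_ofReal
      rw [Real.norm_eq_abs, sq_abs]
      rcases hp1 with h | h <;> rcases hp2 with h' | h' <;> rw [h, h'] <;>
        split_ifs <;>
        first
        | nlinarith [sq_nonneg (a + b)]
        | simp_all
    -- integrate
    have hint : ∫⁻ p, (F p.1 + G p.2) ∂γ ≤
        (∫⁻ p, ENNReal.ofReal (‖p.1 - p.2‖ ^ 2) ∂γ) + ENNReal.ofReal (4 * a ^ 2) := by
      calc ∫⁻ p, (F p.1 + G p.2) ∂γ
          ≤ ∫⁻ p, (ENNReal.ofReal (‖p.1 - p.2‖ ^ 2) + ENNReal.ofReal (4 * a ^ 2)) ∂γ :=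
            lintegral_mono_ae hpt
        _ = (∫⁻ p, ENNReal.ofReal (‖p.1 - p.2‖ ^ 2) ∂γ) + ENNReal.ofReal (4 * a ^ 2) := by
            rw [lintegral_add_right _ measurable_const, lintegral_const, hγuniv, mul_one]
    have hFint : ∫⁻ p, F p.1 ∂γ = ENNReal.ofReal (b / (a + b) * (4 * a ^ 2)
        + a / (a + b) * (b - a) ^ 2) := by
      rw [← lintegral_map hFmeas measurable_fst, h1]
      simp only [muAB]
      rw [lintegral_add_measure, lintegral_smul_measure, lintegral_smul_measure,
        lintegral_dirac, lintegral_dirac]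
      simp only [hF, eq_self_iff_true, if_true, if_neg hne2, smul_eq_mul]
      rw [← ENNReal.ofReal_mul hdiv3, ← ENNReal.ofReal_mul hdiv1,
        ← ENNReal.ofReal_add (by positivity) (by positivity)]
    have hGint : ∫⁻ p, G p.2 ∂γ = ENNReal.ofReal (a / (a + b) * (b - a) ^ 2
        + b / (a + b) * (4 * a ^ 2)) := by
      rw [← lintegral_map hGmeas measurable_snd, h2]
      simp only [nuAB]
      rw [lintegral_add_measure, lintegral_smul_measure, lintegral_smul_measure,
        lintegral_dirac, lintegral_dirac]
      simp only [hG, eq_self_iff_true, if_true, if_neg hne1, smul_eq_mul]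
      rw [← ENNReal.ofReal_mul hdiv1, ← ENNReal.ofReal_mul hdiv3,
        ← ENNReal.ofReal_add (by positivity) (by positivity)]
    have hsum : ∫⁻ p, (F p.1 + G p.2) ∂γ = ENNReal.ofReal (2 * a * (a + b)) := by
      rw [lintegral_add_left (show Measurable fun p : ℝ × ℝ => F p.1 from
        hFmeas.comp measurable_fst), hFint, hGint,
        ← ENNReal.ofReal_add (by positivity) (by positivity)]
      congr 1
      field_simp
      ring
    rw [hsum] at hint
    have hkey : ENNReal.ofReal (2 * a * (b - a)) =
        ENNReal.ofReal (2 * a * (a + b)) - ENNReal.ofReal (4 * a ^ 2) := by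
      rw [← ENNReal.ofReal_sub _ (by positivity)]
      congr 1; ring
    rw [hkey]
    exact tsub_le_iff_right.2 hint
end

section
/- For σ₂ ≥ σ₁ > 0, the second Zolotarev distance between the centred one-dimensional Gaussians N(0,σ₁²) and N(0,σ₂²) equals (σ₂² − σ₁²)/2, while their 2-Wasserstein distance equals σ₂ − σ₁; consequently, with μ = N(0,1) and ν_n = N(0,(1+1/n)²), the ratio Z₂(μ,ν_n)/W₂²(μ,ν_n) = (2n+1)/2 tends to +∞. -/
open MeasureTheory ProbabilityTheory Filter
open scoped ENNReal NNReal

noncomputable def Z2 {E : Type*} [NormedAddCommGroup E] [InnerProductSpace ℝ E]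
    [CompleteSpace E] [MeasurableSpace E] (μ ν : Measure E) : ℝ≥0∞ :=
  ⨆ (u : E → ℝ) (_ : ContDiff ℝ 1 u) (_ : LipschitzWith 1 (gradient u)),
    ENNReal.ofReal (∫ x, u x ∂ν - ∫ x, u x ∂μ)

noncomputable def W2 {E : Type*} [NormedAddCommGroup E] [MeasurableSpace E]
    (μ ν : Measure E) : ℝ :=
  Real.sqrt (W2sq μ ν).toReal

section Aux
open Real

section gaussmoments

variable {v : ℝ≥0}

lemma gauss_repr (hv : v ≠ 0) :
    gaussianReal 0 v
      = volume.withDensity (fun x => ((gaussianPDFReal 0 v x).toNNReal : ℝ≥0∞)) := by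
  rw [gaussianReal_of_var_ne_zero 0 hv]
  rfl

lemma integral_gauss_eq (hv : v ≠ 0) (f : ℝ → ℝ) :
    ∫ x, f x ∂(gaussianReal 0 v) = ∫ x, gaussianPDFReal 0 v x * f x := by
  rw [gauss_repr hv,
    integral_withDensity_eq_integral_smul ((measurable_gaussianPDFReal 0 v).real_toNNReal) f]
  congr 1 with x
  simp [NNReal.smul_def, Real.coe_toNNReal _ (gaussianPDFReal_nonneg 0 v x)]

lemma integrable_gauss_iff (hv : v ≠ 0) (f : ℝ → ℝ) :
    Integrable f (gaussianReal 0 v) ↔ Integrable (fun x => gaussianPDFReal 0 v x * f x) := by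
  rw [gauss_repr hv,
    integrable_withDensity_iff_integrable_smul ((measurable_gaussianPDFReal 0 v).real_toNNReal)]
  constructor <;> intro h <;> refine h.congr (Filter.Eventually.of_forall fun x => ?_) <;>
    simp [NNReal.smul_def, Real.coe_toNNReal _ (gaussianPDFReal_nonneg 0 v x)]

lemma gaussianPDFReal_zero_mean (x : ℝ) :
    gaussianPDFReal 0 v x = (√(2 * π * v))⁻¹ * rexp (-((2 * (v:ℝ))⁻¹) * x ^ 2) := by
  rw [gaussianPDFReal]
  ring_nf

lemma vpos (hv : v ≠ 0) : (0:ℝ) < v := NNReal.coe_pos.mpr (zero_lt_iff.mpr hv)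

lemma bpos (hv : v ≠ 0) : (0:ℝ) < (2 * (v:ℝ))⁻¹ := by
  have := vpos hv; positivity

lemma integrable_sq_exp (hv : v ≠ 0) :
    Integrable (fun x : ℝ => x ^ 2 * rexp (-((2 * (v:ℝ))⁻¹) * x ^ 2)) := by
  have h := integrable_rpow_mul_exp_neg_mul_sq (bpos hv) (s := 2) (by norm_num)
  refine h.congr (Filter.Eventually.of_forall fun x => ?_)
  have h2 : x ^ (2:ℝ) = x ^ (2:ℕ) := by
    rw [show (2:ℝ) = ((2:ℕ):ℝ) by norm_num, Real.rpow_natCast]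
  simp only [h2]

lemma integrable_sq_gauss (hv : v ≠ 0) : Integrable (fun x : ℝ => x ^ 2) (gaussianReal 0 v) := by
  rw [integrable_gauss_iff hv]
  have := (integrable_sq_exp hv).const_mul (√(2 * π * v))⁻¹
  refine this.congr (Filter.Eventually.of_forall fun x => ?_)
  simp only [gaussianPDFReal_zero_mean]
  ring

lemma integrable_id_gauss (hv : v ≠ 0) : Integrable (fun x : ℝ => x) (gaussianReal 0 v) := by
  rw [integrable_gauss_iff hv]
  have := (integrable_mul_exp_neg_mul_sq (bpos hv)).const_mul (√(2 * π * v))⁻¹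
  refine this.congr (Filter.Eventually.of_forall fun x => ?_)
  simp only [gaussianPDFReal_zero_mean]
  ring

lemma integrable_abs_gauss (hv : v ≠ 0) : Integrable (fun x : ℝ => |x|) (gaussianReal 0 v) :=
  (integrable_id_gauss hv).abs

lemma integral_id_gauss (hv : v ≠ 0) : ∫ x, x ∂(gaussianReal 0 v) = 0 := by
  rw [integral_gauss_eq hv]
  have : ∀ x : ℝ, gaussianPDFReal 0 v x * x = -(gaussianPDFReal 0 v (-x) * (-x)) := by
    intro x
    simp only [gaussianPDFReal_zero_mean, neg_sq]
    ring
  have h2 : ∫ x : ℝ, gaussianPDFReal 0 v x * x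
      = ∫ x : ℝ, -(gaussianPDFReal 0 v x * x) := by
    conv_lhs => rw [← integral_neg_eq_self (fun x => gaussianPDFReal 0 v x * x) volume]
    congr 1 with x
    rw [this (-x)]
    ring_nf
  have := h2
  rw [integral_neg] at this
  linarith

lemma integral_sq_exp (hv : v ≠ 0) :
    ∫ x : ℝ, x ^ 2 * rexp (-((2 * (v:ℝ))⁻¹) * x ^ 2)
      = (v:ℝ) * √(π / (2 * (v:ℝ))⁻¹) := by
  set b : ℝ := (2 * (v:ℝ))⁻¹ with hbdef
  have hb : (0:ℝ) < b := bpos hv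
  have hu : ∀ x : ℝ, HasDerivAt (fun y : ℝ => y) 1 x := fun x => hasDerivAt_id x
  have hV : ∀ x : ℝ, HasDerivAt (fun y : ℝ => -(2*b)⁻¹ * rexp (-b * y ^ 2))
      (x * rexp (-b * x ^ 2)) x := by
    intro x
    have h1 : HasDerivAt (fun y : ℝ => -b * y ^ 2) (-b * (2 * x)) x := by
      simpa using ((hasDerivAt_pow 2 x).const_mul (-b))
    have h2 := (h1.exp).const_mul (-(2*b)⁻¹)
    refine h2.congr_deriv ?_
    have hb2 : (2*b)⁻¹ * (2*b) = 1 := inv_mul_cancel₀ (by positivity)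
    linear_combination (x * rexp (-b * x ^ 2)) * hb2
  have hint1 : Integrable ((fun y:ℝ => y) * fun x => x * rexp (-b * x ^ 2)) := by
    refine (integrable_sq_exp hv).congr (Filter.Eventually.of_forall fun x => ?_)
    simp [← hbdef]; ring
  have hint2 : Integrable ((fun _:ℝ => (1:ℝ)) * fun x => -(2*b)⁻¹ * rexp (-b * x ^ 2)) := by
    refine ((integrable_exp_neg_mul_sq hb).const_mul (-(2*b)⁻¹)).congr
      (Filter.Eventually.of_forall fun x => ?_)
    simp
  have hint3 : Integrable ((fun y:ℝ => y) * fun x => -(2*b)⁻¹ * rexp (-b * x ^ 2)) := by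
    refine ((integrable_mul_exp_neg_mul_sq hb).const_mul (-(2*b)⁻¹)).congr
      (Filter.Eventually.of_forall fun x => ?_)
    simp; ring
  have := integral_mul_deriv_eq_deriv_mul_of_integrable (fun x _ => hu x) (fun x _ => hV x) hint1 hint2 hint3
  have heq : ∫ x : ℝ, x ^ 2 * rexp (-b * x ^ 2) = ∫ x : ℝ, x * (x * rexp (-b * x ^ 2)) := by
    congr 1 with x; ring
  rw [heq, this]
  have : ∫ x : ℝ, (1:ℝ) * (-(2*b)⁻¹ * rexp (-b * x ^ 2))
      = -(2*b)⁻¹ * ∫ x : ℝ, rexp (-b * x ^ 2) := by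
    rw [← integral_const_mul]
    congr 1 with x
    ring
  rw [this, integral_gaussian b]
  have hv' := vpos hv
  have hb2 : (2*b)⁻¹ = (v:ℝ) := by
    rw [hbdef]
    field_simp
  rw [hb2]
  ring

end gaussmoments

lemma integral_sq_gauss {v : ℝ≥0} (hv : v ≠ 0) :
    ∫ x, x ^ 2 ∂(gaussianReal 0 v) = (v:ℝ) := by
  rw [integral_gauss_eq hv]
  have h1 : ∫ x : ℝ, gaussianPDFReal 0 v x * x ^ 2
      = (√(2 * π * v))⁻¹ * ∫ x : ℝ, x ^ 2 * rexp (-((2 * (v:ℝ))⁻¹) * x ^ 2) := by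
    rw [← integral_const_mul]
    congr 1 with x
    simp only [gaussianPDFReal_zero_mean]
    ring
  rw [h1, integral_sq_exp hv]
  have hv' := vpos hv
  have h2 : π / (2 * (v:ℝ))⁻¹ = 2 * π * v := by field_simp
  rw [h2]
  have h3 : (0:ℝ) < √(2 * π * v) := Real.sqrt_pos.mpr (by positivity)
  field_simp

lemma integrable_quad_dom {v : ℝ≥0} (hv : v ≠ 0) {f : ℝ → ℝ} (hf : Continuous f)
    {A B C : ℝ} (hbound : ∀ x, |f x| ≤ A + B * |x| + C * x ^ 2) :
    Integrable f (gaussianReal 0 v) := by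
  have hg : Integrable (fun x : ℝ => A + B * |x| + C * x ^ 2) (gaussianReal 0 v) :=
    ((integrable_const A).add ((integrable_abs_gauss hv).const_mul B)).add
      ((integrable_sq_gauss hv).const_mul C)
  exact hg.mono' hf.aestronglyMeasurable (Filter.Eventually.of_forall fun x => by
    simpa [Real.norm_eq_abs] using hbound x)

section tangent

variable {u : ℝ → ℝ}

lemma lipschitz_deriv_of_grad (h2 : LipschitzWith 1 (gradient u)) :
    LipschitzWith 1 (deriv u) := by
  have : gradient u = deriv u := funext fun x => gradient_eq_deriv'
  rwa [this] at h2

lemma deriv_dist_le (hL : LipschitzWith 1 (deriv u)) (x y : ℝ) :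
    |deriv u x - deriv u y| ≤ |x - y| := by
  have := hL.dist_le_mul x y
  simpa [Real.dist_eq] using this

/-- tangent line inequality for differentiable convex functions on ℝ. -/
lemma tangent_le {h : ℝ → ℝ} (hc : ConvexOn ℝ Set.univ h) (hd : Differentiable ℝ h)
    (a b : ℝ) : h a + deriv h a * (b - a) ≤ h b := by
  rcases lt_trichotomy a b with hab | hab | hab
  · have := hc.deriv_le_slope (Set.mem_univ a) (Set.mem_univ b) hab (hd a)
    rw [slope_def_field, le_div_iff₀ (by linarith : (0:ℝ) < b - a)] at this
    linarith
  · simp [hab]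
  · have := hc.slope_le_deriv (Set.mem_univ b) (Set.mem_univ a) hab (hd a)
    rw [slope_def_field, div_le_iff₀ (by linarith : (0:ℝ) < a - b)] at this
    linarith

end tangent

section taylor

variable {u : ℝ → ℝ}

lemma sq_half_contdiff : ContDiff ℝ 1 (fun x : ℝ => x ^ 2 / 2) :=
  (contDiff_id.pow 2).div_const 2

lemma sq_half_hasderiv (x : ℝ) : HasDerivAt (fun y : ℝ => y ^ 2 / 2) x x := by
  have := (hasDerivAt_pow 2 x).div_const 2
  simpa using this

lemma deriv_sq_half : deriv (fun y : ℝ => y ^ 2 / 2) = fun x => x :=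
  funext fun x => (sq_half_hasderiv x).deriv

lemma convex_sq_sub (h1 : ContDiff ℝ 1 u) (hL : LipschitzWith 1 (deriv u)) :
    ConvexOn ℝ Set.univ (fun x => x ^ 2 / 2 - u x) := by
  have hdu : Differentiable ℝ u := h1.differentiable one_ne_zero
  have hd : Differentiable ℝ (fun x => x ^ 2 / 2 - u x) :=
    (differentiable_id.pow 2).div_const 2 |>.sub hdu
  refine Monotone.convexOn_univ_of_deriv hd ?_
  have hder : deriv (fun x => x ^ 2 / 2 - u x) = fun x => x - deriv u x := by
    funext x
    exact ((sq_half_hasderiv x).sub (hdu x).hasDerivAt).deriv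
  rw [hder]
  intro x y hxy
  have := deriv_dist_le hL y x
  rw [abs_of_nonneg (by linarith : (0:ℝ) ≤ y - x)] at this
  have h2 := abs_le.mp this
  simp only
  obtain ⟨hl, hr⟩ := h2; linarith

lemma convex_sq_add (h1 : ContDiff ℝ 1 u) (hL : LipschitzWith 1 (deriv u)) :
    ConvexOn ℝ Set.univ (fun x => x ^ 2 / 2 + u x) := by
  have hdu : Differentiable ℝ u := h1.differentiable one_ne_zero
  have hd : Differentiable ℝ (fun x => x ^ 2 / 2 + u x) :=
    (differentiable_id.pow 2).div_const 2 |>.add hdu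
  refine Monotone.convexOn_univ_of_deriv hd ?_
  have hder : deriv (fun x => x ^ 2 / 2 + u x) = fun x => x + deriv u x := by
    funext x
    exact ((sq_half_hasderiv x).add (hdu x).hasDerivAt).deriv
  rw [hder]
  intro x y hxy
  have := deriv_dist_le hL y x
  rw [abs_of_nonneg (by linarith : (0:ℝ) ≤ y - x)] at this
  have h2 := abs_le.mp this
  simp only
  obtain ⟨hl, hr⟩ := h2; linarith

lemma taylor_ub (h1 : ContDiff ℝ 1 u) (hL : LipschitzWith 1 (deriv u)) (a b : ℝ) :
    u b - u a ≤ deriv u a * (b - a) + (b - a) ^ 2 / 2 := by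
  have hdu : Differentiable ℝ u := h1.differentiable one_ne_zero
  have hd : Differentiable ℝ (fun x => x ^ 2 / 2 - u x) :=
    (differentiable_id.pow 2).div_const 2 |>.sub hdu
  have := tangent_le (convex_sq_sub h1 hL) hd a b
  have hder : deriv (fun x => x ^ 2 / 2 - u x) a = a - deriv u a :=
    ((sq_half_hasderiv a).sub (hdu a).hasDerivAt).deriv
  rw [hder] at this
  nlinarith [this]

lemma taylor_lb (h1 : ContDiff ℝ 1 u) (hL : LipschitzWith 1 (deriv u)) (a b : ℝ) :
    deriv u a * (b - a) - (b - a) ^ 2 / 2 ≤ u b - u a := by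
  have hdu : Differentiable ℝ u := h1.differentiable one_ne_zero
  have hd : Differentiable ℝ (fun x => x ^ 2 / 2 + u x) :=
    (differentiable_id.pow 2).div_const 2 |>.add hdu
  have := tangent_le (convex_sq_add h1 hL) hd a b
  have hder : deriv (fun x => x ^ 2 / 2 + u x) a = a + deriv u a :=
    ((sq_half_hasderiv a).add (hdu a).hasDerivAt).deriv
  rw [hder] at this
  nlinarith [this]

lemma quad_growth (h1 : ContDiff ℝ 1 u) (hL : LipschitzWith 1 (deriv u)) (x : ℝ) :
    |u x| ≤ |u 0| + |deriv u 0| * |x| + (1/2) * x ^ 2 := by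
  have hub := taylor_ub h1 hL 0 x
  have hlb := taylor_lb h1 hL 0 x
  simp only [sub_zero] at hub hlb
  rw [abs_le]
  have h3 : deriv u 0 * x ≤ |deriv u 0| * |x| := by
    calc deriv u 0 * x ≤ |deriv u 0 * x| := le_abs_self _
    _ = |deriv u 0| * |x| := abs_mul _ _
  have h4 : -(|deriv u 0| * |x|) ≤ deriv u 0 * x := by
    rw [← abs_mul]; exact neg_abs_le _
  constructor
  · nlinarith [neg_abs_le (u 0), le_abs_self (u 0)]
  · nlinarith [neg_abs_le (u 0), le_abs_self (u 0)]

end taylor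

section Z2gauss

variable {σ₁ σ₂ : ℝ≥0}

lemma hmap_gauss (h1 : 0 < σ₁) :
    gaussianReal 0 (σ₂ ^ 2)
      = (gaussianReal 0 (σ₁ ^ 2)).map (fun x => ((σ₂:ℝ)/(σ₁:ℝ)) * x) := by
  have hσ1 : (0:ℝ) < σ₁ := NNReal.coe_pos.mpr h1
  have := gaussianReal_map_const_mul (μ := 0) (v := σ₁ ^ 2) ((σ₂:ℝ)/(σ₁:ℝ))
  rw [show ((((σ₂:ℝ)/(σ₁:ℝ)) * ·)) = (fun x => ((σ₂:ℝ)/(σ₁:ℝ)) * x) from rfl] at this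
  rw [this, mul_zero]
  congr 1
  ext
  push_cast
  field_simp

lemma Z2_term_le (h1 : 0 < σ₁) (h12 : σ₁ ≤ σ₂) {u : ℝ → ℝ}
    (hcd : ContDiff ℝ 1 u) (hlip : LipschitzWith 1 (gradient u)) :
    ∫ x, u x ∂(gaussianReal 0 (σ₂ ^ 2)) - ∫ x, u x ∂(gaussianReal 0 (σ₁ ^ 2))
      ≤ ((σ₂:ℝ) ^ 2 - (σ₁:ℝ) ^ 2) / 2 := by
  have hσ1 : (0:ℝ) < σ₁ := NNReal.coe_pos.mpr h1
  have hσ2 : (0:ℝ) < σ₂ := lt_of_lt_of_le hσ1 h12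
  have hv1 : σ₁ ^ 2 ≠ 0 := pow_ne_zero 2 h1.ne'
  set c : ℝ := (σ₂:ℝ)/(σ₁:ℝ) with hcdef
  have hc1 : 1 ≤ c := (one_le_div hσ1).mpr h12
  have hc0 : 0 < c := div_pos hσ2 hσ1
  set K := deriv u with hKdef
  have hK : LipschitzWith 1 (deriv u) := lipschitz_deriv_of_grad hlip
  set μ := gaussianReal 0 (σ₁ ^ 2) with hμdef
  have int_u : Integrable u μ :=
    integrable_quad_dom hv1 hcd.continuous (quad_growth hcd hK)
  have int_uc : Integrable (fun x => u (c * x)) μ := by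
    refine integrable_quad_dom hv1 (hcd.continuous.comp (continuous_const.mul continuous_id))
      (A := |u 0|) (B := |K 0| * c) (C := c^2/2) fun x => ?_
    have hg := quad_growth hcd hK (c * x)
    rw [abs_mul, abs_of_nonneg hc0.le] at hg
    have h2 : (1/2) * (c*x)^2 = (c^2/2) * x^2 := by ring
    have h3 : |K 0| * (c * |x|) = |K 0| * c * |x| := by ring
    linarith [hg, h2.le, h3.le]
  have hint : ∫ x, u x ∂(gaussianReal 0 (σ₂ ^ 2)) = ∫ x, u (c * x) ∂μ := by
    rw [hmap_gauss h1, integral_map (measurable_const_mul c).aemeasurable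
      hcd.continuous.aestronglyMeasurable]
  have hpt : ∀ x, u (c * x) - u x
      ≤ (K 0 * (c-1)) * x + ((c-1) + (c-1)^2/2) * x^2 := by
    intro x
    have hT := taylor_ub hcd hK x (c * x)
    have hKx := deriv_dist_le hK x 0
    rw [sub_zero] at hKx
    have h5 : (K x - K 0) * ((c-1)*x) ≤ (c-1) * x^2 := by
      have habs : (K x - K 0) * ((c-1)*x) ≤ |K x - K 0| * ((c-1) * |x|) := by
        calc (K x - K 0) * ((c-1)*x) ≤ |(K x - K 0) * ((c-1)*x)| := le_abs_self _
        _ = |K x - K 0| * ((c-1) * |x|) := by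
            rw [abs_mul, abs_mul, abs_of_nonneg (by linarith : (0:ℝ) ≤ c - 1)]
      have h6 : |K x - K 0| * ((c-1) * |x|) ≤ |x| * ((c-1) * |x|) :=
        mul_le_mul_of_nonneg_right hKx (mul_nonneg (by linarith) (abs_nonneg x))
      have h7 : |x| * ((c-1)*|x|) = (c-1) * |x|^2 := by ring
      rw [h7, sq_abs] at h6
      linarith
    nlinarith [hT, h5]
  have int_R : Integrable (fun x => (K 0 * (c-1)) * x + ((c-1) + (c-1)^2/2) * x^2) μ :=
    ((integrable_id_gauss hv1).const_mul _).add ((integrable_sq_gauss hv1).const_mul _)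
  have hR : ∫ x, ((K 0 * (c-1)) * x + ((c-1) + (c-1)^2/2) * x^2) ∂μ
      = ((c-1) + (c-1)^2/2) * (σ₁:ℝ)^2 := by
    rw [integral_add ((integrable_id_gauss hv1).const_mul _)
      ((integrable_sq_gauss hv1).const_mul _), integral_const_mul, integral_const_mul,
      integral_id_gauss hv1, integral_sq_gauss hv1]
    push_cast
    ring
  calc ∫ x, u x ∂(gaussianReal 0 (σ₂ ^ 2)) - ∫ x, u x ∂μ
      = ∫ x, (u (c * x) - u x) ∂μ := by rw [hint, integral_sub int_uc int_u]
    _ ≤ ∫ x, ((K 0 * (c-1)) * x + ((c-1) + (c-1)^2/2) * x^2) ∂μ :=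
        integral_mono (int_uc.sub int_u) int_R hpt
    _ = ((c-1) + (c-1)^2/2) * (σ₁:ℝ)^2 := hR
    _ = ((σ₂:ℝ) ^ 2 - (σ₁:ℝ) ^ 2) / 2 := by
        rw [hcdef]
        field_simp
        ring

lemma Z2_gauss (h1 : 0 < σ₁) (h12 : σ₁ ≤ σ₂) :
    Z2 (gaussianReal 0 (σ₁ ^ 2)) (gaussianReal 0 (σ₂ ^ 2))
      = ENNReal.ofReal (((σ₂ : ℝ) ^ 2 - (σ₁ : ℝ) ^ 2) / 2) := by
  have hσ1 : (0:ℝ) < σ₁ := NNReal.coe_pos.mpr h1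
  have hσ2 : (0:ℝ) < σ₂ := lt_of_lt_of_le hσ1 h12
  have hv1 : σ₁ ^ 2 ≠ 0 := pow_ne_zero 2 h1.ne'
  have hv2 : σ₂ ^ 2 ≠ 0 := pow_ne_zero 2 (h1.trans_le h12).ne'
  apply le_antisymm
  · refine iSup_le fun u => iSup_le fun hcd => iSup_le fun hlip =>
      ENNReal.ofReal_le_ofReal (Z2_term_le h1 h12 hcd hlip)
  · have hu0cd : ContDiff ℝ 1 (fun x : ℝ => x ^ 2 / 2) := sq_half_contdiff
    have hgrad : gradient (fun x : ℝ => x ^ 2 / 2) = fun x => x := by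
      funext x
      rw [gradient_eq_deriv']
      exact (sq_half_hasderiv x).deriv
    have hlip : LipschitzWith 1 (gradient fun x : ℝ => x ^ 2 / 2) := by
      rw [hgrad]
      exact LipschitzWith.id
    have hval : ∫ x, x ^ 2 / 2 ∂(gaussianReal 0 (σ₂ ^ 2))
        - ∫ x, x ^ 2 / 2 ∂(gaussianReal 0 (σ₁ ^ 2))
        = ((σ₂ : ℝ) ^ 2 - (σ₁ : ℝ) ^ 2) / 2 := by
      rw [integral_div, integral_div, integral_sq_gauss hv2, integral_sq_gauss hv1]
      push_cast
      ring
    rw [← hval]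
    exact le_iSup_of_le (fun x : ℝ => x ^ 2 / 2)
      (le_iSup_of_le hu0cd (le_iSup_of_le hlip le_rfl))

end Z2gauss

section W2gauss

lemma lintegral_sq_gauss {v : ℝ≥0} (hv : v ≠ 0) :
    ∫⁻ x, ENNReal.ofReal (x ^ 2) ∂(gaussianReal 0 v) = ENNReal.ofReal (v:ℝ) := by
  rw [← ofReal_integral_eq_lintegral_ofReal (integrable_sq_gauss hv)
    (Filter.Eventually.of_forall fun x => sq_nonneg x), integral_sq_gauss hv]

variable {σ₁ σ₂ : ℝ≥0}

lemma W2sq_le_gauss (h1 : 0 < σ₁) (h12 : σ₁ ≤ σ₂) :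
    W2sq (gaussianReal 0 (σ₁ ^ 2)) (gaussianReal 0 (σ₂ ^ 2))
      ≤ ENNReal.ofReal (((σ₂:ℝ) - (σ₁:ℝ)) ^ 2) := by
  have hσ1 : (0:ℝ) < σ₁ := NNReal.coe_pos.mpr h1
  have hv1 : σ₁ ^ 2 ≠ 0 := pow_ne_zero 2 h1.ne'
  set c : ℝ := (σ₂:ℝ)/(σ₁:ℝ) with hcdef
  set μ := gaussianReal 0 (σ₁ ^ 2) with hμdef
  set m : ℝ → ℝ × ℝ := fun x => (x, c * x) with hmdef
  have hm : Measurable m := measurable_id.prodMk (measurable_const_mul c)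
  have hfst : (μ.map m).map Prod.fst = μ := by
    rw [Measure.map_map measurable_fst hm,
      show (Prod.fst ∘ m) = id from rfl, Measure.map_id]
  have hsnd : (μ.map m).map Prod.snd = gaussianReal 0 (σ₂ ^ 2) := by
    rw [Measure.map_map measurable_snd hm, hmap_gauss h1]
    rfl
  refine le_trans (iInf_le_of_le (μ.map m) (iInf_le_of_le hfst (iInf_le_of_le hsnd le_rfl))) ?_
  rw [lintegral_map (by fun_prop) hm]
  have hpt : ∀ x : ℝ, ENNReal.ofReal (‖(m x).1 - (m x).2‖ ^ 2)
      = ENNReal.ofReal ((c-1)^2) * ENNReal.ofReal (x ^ 2) := by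
    intro x
    rw [← ENNReal.ofReal_mul (by positivity)]
    congr 1
    rw [Real.norm_eq_abs, sq_abs]
    ring
  rw [lintegral_congr hpt, lintegral_const_mul _ (by fun_prop), lintegral_sq_gauss hv1,
    ← ENNReal.ofReal_mul (by positivity)]
  apply le_of_eq
  congr 1
  rw [hcdef]
  push_cast
  field_simp

lemma W2sq_ge_gauss (h1 : 0 < σ₁) (h12 : σ₁ ≤ σ₂) :
    ENNReal.ofReal (((σ₂:ℝ) - (σ₁:ℝ)) ^ 2)
      ≤ W2sq (gaussianReal 0 (σ₁ ^ 2)) (gaussianReal 0 (σ₂ ^ 2)) := by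
  have hσ1 : (0:ℝ) < σ₁ := NNReal.coe_pos.mpr h1
  have hσ2 : (0:ℝ) < σ₂ := lt_of_lt_of_le hσ1 h12
  have hv1 : σ₁ ^ 2 ≠ 0 := pow_ne_zero 2 h1.ne'
  have hv2 : σ₂ ^ 2 ≠ 0 := pow_ne_zero 2 (h1.trans_le h12).ne'
  set t : ℝ := (σ₂:ℝ)/(σ₁:ℝ) with htdef
  have ht1 : 1 ≤ t := (one_le_div hσ1).mpr h12
  have ht0 : 0 < t := div_pos hσ2 hσ1
  refine le_iInf fun γ => le_iInf fun hfst => le_iInf fun hsnd => ?_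
  have key : ∀ x y : ℝ, (t-1)/t * y ^ 2 ≤ (x - y) ^ 2 + (t - 1) * x ^ 2 := by
    intro x y
    rw [div_mul_eq_mul_div, div_le_iff₀ ht0]
    nlinarith [sq_nonneg (t * x - y)]
  have hA : ∫⁻ p : ℝ × ℝ, ENNReal.ofReal ((t - 1) * p.1 ^ 2) ∂γ
      = ENNReal.ofReal ((t - 1) * (σ₁:ℝ)^2) := by
    have := lintegral_map (f := fun x : ℝ => ENNReal.ofReal ((t - 1) * x ^ 2))
      (μ := γ) (g := Prod.fst) (by fun_prop) measurable_fst
    rw [hfst] at this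
    rw [← this]
    have : ∀ x : ℝ, ENNReal.ofReal ((t-1) * x ^ 2)
        = ENNReal.ofReal (t-1) * ENNReal.ofReal (x ^ 2) := fun x =>
      ENNReal.ofReal_mul (by linarith)
    rw [lintegral_congr this, lintegral_const_mul _ (by fun_prop), lintegral_sq_gauss hv1,
      ← ENNReal.ofReal_mul (by linarith)]
    congr 1
  have hB : ∫⁻ p : ℝ × ℝ, ENNReal.ofReal ((t-1)/t * p.2 ^ 2) ∂γ
      = ENNReal.ofReal ((t-1)/t * (σ₂:ℝ)^2) := by
    have := lintegral_map (f := fun y : ℝ => ENNReal.ofReal ((t-1)/t * y ^ 2))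
      (μ := γ) (g := Prod.snd) (by fun_prop) measurable_snd
    rw [hsnd] at this
    rw [← this]
    have : ∀ y : ℝ, ENNReal.ofReal ((t-1)/t * y ^ 2)
        = ENNReal.ofReal ((t-1)/t) * ENNReal.ofReal (y ^ 2) := fun y =>
      ENNReal.ofReal_mul (div_nonneg (by linarith) ht0.le)
    rw [lintegral_congr this, lintegral_const_mul _ (by fun_prop), lintegral_sq_gauss hv2,
      ← ENNReal.ofReal_mul (div_nonneg (by linarith) ht0.le)]
    congr 1
  have hBA : ∫⁻ p : ℝ × ℝ, ENNReal.ofReal ((t-1)/t * p.2 ^ 2) ∂γ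
      ≤ (∫⁻ p, ENNReal.ofReal (‖p.1 - p.2‖ ^ 2) ∂γ)
        + ∫⁻ p : ℝ × ℝ, ENNReal.ofReal ((t - 1) * p.1 ^ 2) ∂γ := by
    rw [← lintegral_add_right _ (by fun_prop)]
    refine lintegral_mono fun p => ?_
    rw [← ENNReal.ofReal_add (by positivity) (by nlinarith)]
    refine ENNReal.ofReal_le_ofReal ?_
    rw [Real.norm_eq_abs, sq_abs]
    exact key p.1 p.2
  rw [hA, hB] at hBA
  have hsub : ENNReal.ofReal (((σ₂:ℝ) - (σ₁:ℝ)) ^ 2)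
      = ENNReal.ofReal ((t-1)/t * (σ₂:ℝ)^2) - ENNReal.ofReal ((t - 1) * (σ₁:ℝ)^2) := by
    rw [← ENNReal.ofReal_sub _ (by nlinarith)]
    congr 1
    rw [htdef]
    field_simp
  rw [hsub]
  exact tsub_le_iff_right.mpr hBA

lemma W2sq_gauss (h1 : 0 < σ₁) (h12 : σ₁ ≤ σ₂) :
    W2sq (gaussianReal 0 (σ₁ ^ 2)) (gaussianReal 0 (σ₂ ^ 2))
      = ENNReal.ofReal (((σ₂:ℝ) - (σ₁:ℝ)) ^ 2) :=
  le_antisymm (W2sq_le_gauss h1 h12) (W2sq_ge_gauss h1 h12)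

lemma W2_gauss (h1 : 0 < σ₁) (h12 : σ₁ ≤ σ₂) :
    W2 (gaussianReal 0 (σ₁ ^ 2)) (gaussianReal 0 (σ₂ ^ 2)) = (σ₂:ℝ) - (σ₁:ℝ) := by
  rw [W2, W2sq_gauss h1 h12, ENNReal.toReal_ofReal (sq_nonneg _),
    Real.sqrt_sq (by simpa using h12)]

end W2gauss

lemma ratio_eq (n : ℕ) (hn : 0 < n) :
    (Z2 (gaussianReal 0 1) (gaussianReal 0 ((1 + 1 / (n : ℝ≥0)) ^ 2))).toReal
      / (W2sq (gaussianReal 0 1) (gaussianReal 0 ((1 + 1 / (n : ℝ≥0)) ^ 2))).toReal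
    = (2 * (n : ℝ) + 1) / 2 := by
  have hone : (gaussianReal 0 1) = gaussianReal 0 ((1:ℝ≥0) ^ 2) := by norm_num
  set s : ℝ≥0 := 1 + 1 / (n : ℝ≥0) with hsdef
  have h12 : (1:ℝ≥0) ≤ s := le_self_add
  have hZ := Z2_gauss (σ₁ := 1) (σ₂ := s) one_pos h12
  have hW := W2sq_gauss (σ₁ := 1) (σ₂ := s) one_pos h12
  rw [hone, hZ, hW]
  have hnR : (0:ℝ) < (n:ℝ) := by exact_mod_cast hn
  have hs : (s:ℝ) = 1 + 1 / (n:ℝ) := by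
    rw [hsdef]
    push_cast
    ring
  rw [ENNReal.toReal_ofReal (by push_cast [hs]; nlinarith [one_div_nonneg.mpr hnR.le, sq_nonneg (1/(n:ℝ))]),
    ENNReal.toReal_ofReal (sq_nonneg _), hs]
  push_cast
  have hne : (n:ℝ) ≠ 0 := hnR.ne'
  field_simp
  ring

end Aux

theorem stmt14 :
    (∀ σ₁ σ₂ : ℝ≥0, 0 < σ₁ → σ₁ ≤ σ₂ →
      Z2 (gaussianReal 0 (σ₁ ^ 2)) (gaussianReal 0 (σ₂ ^ 2))
          = ENNReal.ofReal (((σ₂ : ℝ) ^ 2 - (σ₁ : ℝ) ^ 2) / 2) ∧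
      W2 (gaussianReal 0 (σ₁ ^ 2)) (gaussianReal 0 (σ₂ ^ 2)) = (σ₂ : ℝ) - (σ₁ : ℝ)) ∧
    (∀ n : ℕ, 0 < n →
      (Z2 (gaussianReal 0 1) (gaussianReal 0 ((1 + 1 / (n : ℝ≥0)) ^ 2))).toReal
          / (W2sq (gaussianReal 0 1) (gaussianReal 0 ((1 + 1 / (n : ℝ≥0)) ^ 2))).toReal
        = (2 * (n : ℝ) + 1) / 2) ∧
    Tendsto (fun n : ℕ =>
      (Z2 (gaussianReal 0 1) (gaussianReal 0 ((1 + 1 / (n : ℝ≥0)) ^ 2))).toReal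
        / (W2sq (gaussianReal 0 1) (gaussianReal 0 ((1 + 1 / (n : ℝ≥0)) ^ 2))).toReal)
      atTop atTop := by
  refine ⟨fun σ₁ σ₂ h1 h12 => ⟨Z2_gauss h1 h12, W2_gauss h1 h12⟩, ratio_eq, ?_⟩
  have hlim : Tendsto (fun n : ℕ => (2 * (n : ℝ) + 1) / 2) atTop atTop := by
    apply Tendsto.atTop_div_const (by norm_num : (0:ℝ) < 2)
    apply tendsto_atTop_add_const_right
    exact tendsto_natCast_atTop_atTop.const_mul_atTop (by norm_num)
  refine hlim.congr' ?_
  filter_upwards [eventually_ge_atTop 1] with n hn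
  exact (ratio_eq n hn).symm
end

section
/- Let μ, ν ∈ 𝒫₂(ℝ^d) satisfy [μ] = [ν]. Then Z₂(μ,ν) ≤ (1/2)(σ_μ + σ_ν)·W₂(μ,ν), where σ_μ, σ_ν are the standard deviations of μ and ν. -/
open scoped RealInnerProductSpace


open MeasureTheory
open scoped ENNReal

noncomputable def bary {E : Type*} [NormedAddCommGroup E] [NormedSpace ℝ E]
    [CompleteSpace E] [MeasurableSpace E] (μ : Measure E) : E :=
  ∫ x, x ∂μ

noncomputable def var2 {E : Type*} [NormedAddCommGroup E] [NormedSpace ℝ E]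
    [CompleteSpace E] [MeasurableSpace E] (μ : Measure E) : ℝ :=
  ∫ x, ‖x - bary μ‖ ^ 2 ∂μ


section auxStmt16
set_option linter.unusedSectionVars false

variable {E : Type*} [NormedAddCommGroup E] [InnerProductSpace ℝ E] [CompleteSpace E]
  [MeasurableSpace E] [BorelSpace E] [SecondCountableTopology E]

theorem taylor_abs (u : E → ℝ) (hu : ContDiff ℝ 1 u) (hl : LipschitzWith 1 (gradient u))
    (b x y : E) :
    |u y - u x - ⟪gradient u b, y - x⟫| ≤ (‖x - b‖ + ‖y - b‖) / 2 * ‖y - x‖ := by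
  have hdiff : Differentiable ℝ u := hu.differentiable one_ne_zero
  have hgc : Continuous (gradient u) := hl.continuous
  set v := y - x with hv
  have hline : ∀ t : ℝ, HasDerivAt (fun s : ℝ => u (x + s • v)) ⟪gradient u (x + t • v), v⟫ t := by
    intro t
    have h1 : HasDerivAt (fun s : ℝ => x + s • v) v t := by
      simpa using ((hasDerivAt_id t).smul_const v).const_add x
    have h2 := ((hdiff (x + t • v)).hasFDerivAt).comp_hasDerivAt t h1
    refine h2.congr_deriv ?_
    rw [← toDual_gradient, InnerProductSpace.toDual_apply_apply]
  have hcont : Continuous fun t : ℝ => ⟪gradient u (x + t • v), v⟫ :=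
    (hgc.comp (by continuity)).inner continuous_const
  have ftc : ∫ t in (0:ℝ)..1, ⟪gradient u (x + t • v), v⟫ = u y - u x := by
    have := intervalIntegral.integral_eq_sub_of_hasDerivAt (f := fun s : ℝ => u (x + s • v))
      (fun t _ => hline t) (hcont.intervalIntegrable 0 1)
    simpa [hv] using this
  have hcont2 : Continuous fun t : ℝ => ⟪gradient u (x + t • v) - gradient u b, v⟫ :=
    ((hgc.comp (by continuity)).sub continuous_const).inner continuous_const
  have key : u y - u x - ⟪gradient u b, v⟫
      = ∫ t in (0:ℝ)..1, ⟪gradient u (x + t • v) - gradient u b, v⟫ := by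
    have : (fun t : ℝ => ⟪gradient u (x + t • v) - gradient u b, v⟫)
        = fun t : ℝ => ⟪gradient u (x + t • v), v⟫ - ⟪gradient u b, v⟫ := by
      funext t; rw [inner_sub_left]
    rw [this, intervalIntegral.integral_sub (hcont.intervalIntegrable 0 1)
      (intervalIntegrable_const), ftc]
    simp
  have hb : ∀ t ∈ Set.Icc (0:ℝ) 1, |⟪gradient u (x + t • v) - gradient u b, v⟫|
      ≤ ((1 - t) * ‖x - b‖ + t * ‖y - b‖) * ‖v‖ := by
    intro t ht
    have h1 := abs_real_inner_le_norm (gradient u (x + t • v) - gradient u b) v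
    have h2 : ‖gradient u (x + t • v) - gradient u b‖ ≤ ‖x + t • v - b‖ := by
      have := hl.dist_le_mul (x + t • v) b
      simpa [dist_eq_norm] using this
    have h3 : ‖x + t • v - b‖ ≤ (1 - t) * ‖x - b‖ + t * ‖y - b‖ := by
      have hrw : x + t • v - b = (1 - t) • (x - b) + t • (y - b) := by
        rw [hv]; module
      rw [hrw]
      calc ‖(1 - t) • (x - b) + t • (y - b)‖ ≤ ‖(1 - t) • (x - b)‖ + ‖t • (y - b)‖ :=
            norm_add_le _ _
        _ = (1 - t) * ‖x - b‖ + t * ‖y - b‖ := by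
            rw [norm_smul, norm_smul, Real.norm_eq_abs, Real.norm_eq_abs,
              abs_of_nonneg (by linarith [ht.2] : (0:ℝ) ≤ 1 - t), abs_of_nonneg ht.1]
    exact h1.trans (mul_le_mul_of_nonneg_right (h2.trans h3) (norm_nonneg _))
  have habs : |u y - u x - ⟪gradient u b, v⟫|
      ≤ ∫ t in (0:ℝ)..1, |⟪gradient u (x + t • v) - gradient u b, v⟫| := by
    rw [key]
    exact intervalIntegral.abs_integral_le_integral_abs zero_le_one
  have hmono : (∫ t in (0:ℝ)..1, |⟪gradient u (x + t • v) - gradient u b, v⟫|)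
      ≤ ∫ t in (0:ℝ)..1, ((1 - t) * ‖x - b‖ + t * ‖y - b‖) * ‖v‖ := by
    refine intervalIntegral.integral_mono_on zero_le_one
      ((hcont2.abs).intervalIntegrable 0 1) (Continuous.intervalIntegrable (by continuity) 0 1) hb
  have heval : (∫ t in (0:ℝ)..1, ((1 - t) * ‖x - b‖ + t * ‖y - b‖) * ‖v‖)
      = (‖x - b‖ + ‖y - b‖) / 2 * ‖v‖ := by
    have hrw : (fun t : ℝ => ((1 - t) * ‖x - b‖ + t * ‖y - b‖) * ‖v‖)
        = fun t : ℝ => ‖x - b‖ * ‖v‖ + t * ((‖y - b‖ - ‖x - b‖) * ‖v‖) := by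
      funext t; ring
    rw [hrw, intervalIntegral.integral_add intervalIntegrable_const
      ((intervalIntegral.intervalIntegrable_id).mul_const _),
      intervalIntegral.integral_const, intervalIntegral.integral_mul_const,
      integral_id]
    simp
    ring
  calc |u y - u x - ⟪gradient u b, v⟫| ≤ _ := habs
    _ ≤ _ := hmono
    _ = _ := by rw [heval]

theorem u_growth (u : E → ℝ) (hu : ContDiff ℝ 1 u) (hl : LipschitzWith 1 (gradient u)) (y : E) :
    |u y| ≤ (|u 0| + ‖gradient u 0‖ + 1) * (1 + ‖y‖ ^ 2) := by
  have h := taylor_abs u hu hl 0 0 y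
  simp only [sub_zero, norm_zero, zero_add] at h
  have h2 : |⟪gradient u 0, y⟫| ≤ ‖gradient u 0‖ * ‖y‖ := abs_real_inner_le_norm _ _
  have h3 : ‖y‖ ≤ 1 + ‖y‖ ^ 2 := by nlinarith [norm_nonneg y]
  have h4 := abs_abs_sub_abs_le_abs_sub (u y) (u 0 + ⟪gradient u 0, y⟫)
  have h5 := abs_add_le (u 0) ⟪gradient u 0, y⟫
  have h6 := abs_sub_abs_le_abs_sub (u y) (u 0 + ⟪gradient u 0, y⟫)
  have h7 : |u y - (u 0 + ⟪gradient u 0, y⟫)| ≤ ‖y‖ / 2 * ‖y‖ := by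
    calc |u y - (u 0 + ⟪gradient u 0, y⟫)| = |u y - u 0 - ⟪gradient u 0, y⟫| := by ring_nf
      _ ≤ _ := h
  nlinarith [norm_nonneg (gradient u 0), norm_nonneg y, abs_nonneg (u 0), sq_nonneg (‖y‖)]

theorem u_integrable (u : E → ℝ) (hu : ContDiff ℝ 1 u) (hl : LipschitzWith 1 (gradient u))
    (μ : Measure E) [IsProbabilityMeasure μ] (hμ : Integrable (fun x => ‖x‖ ^ 2) μ) :
    Integrable u μ := by
  refine Integrable.mono' (g := fun y => (|u 0| + ‖gradient u 0‖ + 1) * (1 + ‖y‖ ^ 2))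
    (((integrable_const (1:ℝ)).add hμ).const_mul _) hu.continuous.aestronglyMeasurable
    (ae_of_all _ fun y => ?_)
  simpa [Real.norm_eq_abs] using u_growth u hu hl y

theorem id_integrable (μ : Measure E) [IsProbabilityMeasure μ]
    (hμ : Integrable (fun x => ‖x‖ ^ 2) μ) : Integrable (fun x : E => x) μ := by
  refine Integrable.mono' (g := fun y => 1 + ‖y‖ ^ 2) ((integrable_const (1:ℝ)).add hμ)
    continuous_id.aestronglyMeasurable (ae_of_all _ fun y => ?_)
  show ‖y‖ ≤ 1 + ‖y‖ ^ 2
  nlinarith [norm_nonneg y]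

theorem sub_b_sq_integrable (μ : Measure E) [IsProbabilityMeasure μ]
    (hμ : Integrable (fun x => ‖x‖ ^ 2) μ) (b : E) :
    Integrable (fun x => ‖x - b‖ ^ 2) μ := by
  refine Integrable.mono' (g := fun y => 2 * ‖y‖ ^ 2 + 2 * ‖b‖ ^ 2)
    ((hμ.const_mul 2).add (integrable_const _))
    (Continuous.aestronglyMeasurable (by continuity)) (ae_of_all _ fun y => ?_)
  have := norm_sub_le y b
  have h0 := norm_nonneg (y - b)
  show ‖‖y - b‖ ^ 2‖ ≤ 2 * ‖y‖ ^ 2 + 2 * ‖b‖ ^ 2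
  rw [Real.norm_eq_abs, abs_of_nonneg (by positivity)]
  nlinarith [norm_nonneg y, norm_nonneg b, sq_nonneg (‖y‖ - ‖b‖), mul_self_le_mul_self h0 this]

theorem core (μ ν : Measure E) [IsProbabilityMeasure μ] [IsProbabilityMeasure ν]
    (hμ : Integrable (fun x => ‖x‖ ^ 2) μ) (hν : Integrable (fun x => ‖x‖ ^ 2) ν)
    (hbar : (∫ x, x ∂μ) = ∫ x, x ∂ν)
    (u : E → ℝ) (hu : ContDiff ℝ 1 u) (hl : LipschitzWith 1 (gradient u))
    (γ : Measure (E × E)) (hγ1 : γ.map Prod.fst = μ) (hγ2 : γ.map Prod.snd = ν)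
    (hfin : ∫⁻ p, ENNReal.ofReal (‖p.1 - p.2‖ ^ 2) ∂γ ≠ ⊤) :
    (∫ x, u x ∂ν) - ∫ x, u x ∂μ ≤
      (Real.sqrt (∫ x, ‖x - (∫ x, x ∂μ)‖ ^ 2 ∂μ) + Real.sqrt (∫ x, ‖x - (∫ x, x ∂μ)‖ ^ 2 ∂ν)) / 2
        * Real.sqrt ((∫⁻ p, ENNReal.ofReal (‖p.1 - p.2‖ ^ 2) ∂γ).toReal) := by
  have hprob : IsProbabilityMeasure γ := by
    constructor
    have := congrArg (fun m : Measure E => m Set.univ) hγ1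
    simpa [Measure.map_apply measurable_fst MeasurableSet.univ] using this
  set b := ∫ x, x ∂μ with hb
  set g := gradient u b with hg
  -- transfer helpers
  have tr1 : ∀ (f : E → ℝ), Continuous f → Integrable f μ →
      Integrable (fun p : E × E => f p.1) γ := by
    intro f hf hfi
    rw [← hγ1] at hfi
    exact (integrable_map_measure hf.aestronglyMeasurable measurable_fst.aemeasurable).mp hfi
  have tr2 : ∀ (f : E → ℝ), Continuous f → Integrable f ν →
      Integrable (fun p : E × E => f p.2) γ := by
    intro f hf hfi
    rw [← hγ2] at hfi
    exact (integrable_map_measure hf.aestronglyMeasurable measurable_snd.aemeasurable).mp hfi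
  have trint1 : ∀ (f : E → ℝ), Continuous f → (∫ p, f p.1 ∂γ) = ∫ x, f x ∂μ := by
    intro f hf
    rw [← hγ1, integral_map measurable_fst.aemeasurable hf.aestronglyMeasurable]
  have trint2 : ∀ (f : E → ℝ), Continuous f → (∫ p, f p.2 ∂γ) = ∫ x, f x ∂ν := by
    intro f hf
    rw [← hγ2, integral_map measurable_snd.aemeasurable hf.aestronglyMeasurable]
  -- integrabilities
  have cs1 : Continuous fun p : E × E => ‖p.1 - b‖ := (continuous_fst.sub continuous_const).norm
  have cs2 : Continuous fun p : E × E => ‖p.2 - b‖ := (continuous_snd.sub continuous_const).norm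
  have ct : Continuous fun p : E × E => ‖p.1 - p.2‖ := (continuous_fst.sub continuous_snd).norm
  have hidμ := id_integrable μ hμ
  have hidν := id_integrable ν hν
  have hidγ1 : Integrable (fun p : E × E => p.1) γ := by
    rw [← hγ1] at hidμ
    exact (integrable_map_measure continuous_id.aestronglyMeasurable
      measurable_fst.aemeasurable).mp hidμ
  have hidγ2 : Integrable (fun p : E × E => p.2) γ := by
    rw [← hγ2] at hidν
    exact (integrable_map_measure continuous_id.aestronglyMeasurable
      measurable_snd.aemeasurable).mp hidν
  have huμ : Integrable u μ := u_integrable u hu hl μ hμ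
  have huν : Integrable u ν := u_integrable u hu hl ν hν
  have huγ1 : Integrable (fun p : E × E => u p.1) γ := tr1 u hu.continuous huμ
  have huγ2 : Integrable (fun p : E × E => u p.2) γ := tr2 u hu.continuous huν
  have hsγ : Integrable (fun p : E × E => ‖p.1 - b‖ ^ 2) γ :=
    tr1 _ ((continuous_id.sub continuous_const).norm.pow 2) (sub_b_sq_integrable μ hμ b)
  have hs'γ : Integrable (fun p : E × E => ‖p.2 - b‖ ^ 2) γ :=
    tr2 _ ((continuous_id.sub continuous_const).norm.pow 2) (sub_b_sq_integrable ν hν b)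
  have htγ : Integrable (fun p : E × E => ‖p.1 - p.2‖ ^ 2) γ := by
    constructor
    · exact (ct.pow 2).aestronglyMeasurable
    · rw [hasFiniteIntegral_iff_ofReal (ae_of_all _ fun p => sq_nonneg _)]
      exact lt_top_iff_ne_top.mpr hfin
  -- products integrable
  have hprod1 : Integrable (fun p : E × E => ‖p.1 - b‖ * ‖p.1 - p.2‖) γ := by
    refine Integrable.mono' (hsγ.add htγ) (cs1.mul ct).aestronglyMeasurable
      (ae_of_all _ fun p => ?_)
    show ‖‖p.1 - b‖ * ‖p.1 - p.2‖‖ ≤ ‖p.1 - b‖ ^ 2 + ‖p.1 - p.2‖ ^ 2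
    rw [Real.norm_eq_abs, abs_of_nonneg (by positivity)]
    nlinarith [sq_nonneg (‖p.1 - b‖ - ‖p.1 - p.2‖), norm_nonneg (p.1 - b), norm_nonneg (p.1 - p.2)]
  have hprod2 : Integrable (fun p : E × E => ‖p.2 - b‖ * ‖p.1 - p.2‖) γ := by
    refine Integrable.mono' (hs'γ.add htγ) (cs2.mul ct).aestronglyMeasurable
      (ae_of_all _ fun p => ?_)
    show ‖‖p.2 - b‖ * ‖p.1 - p.2‖‖ ≤ ‖p.2 - b‖ ^ 2 + ‖p.1 - p.2‖ ^ 2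
    rw [Real.norm_eq_abs, abs_of_nonneg (by positivity)]
    nlinarith [sq_nonneg (‖p.2 - b‖ - ‖p.1 - p.2‖), norm_nonneg (p.2 - b), norm_nonneg (p.1 - p.2)]
  -- Step A : the difference equals ∫ F dγ
  set F : E × E → ℝ := fun p => u p.2 - u p.1 - ⟪g, p.2 - p.1⟫ with hF
  have hinner_int : Integrable (fun p : E × E => ⟪g, p.2 - p.1⟫) γ :=
    (hidγ2.sub hidγ1).const_inner g
  have hFi : Integrable F γ := (huγ2.sub huγ1).sub hinner_int
  have stepA : (∫ x, u x ∂ν) - ∫ x, u x ∂μ = ∫ p, F p ∂γ := by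
    have E1 : ∫ p, F p ∂γ = (∫ p, (u p.2 - u p.1) ∂γ) - ∫ p, ⟪g, p.2 - p.1⟫ ∂γ :=
      integral_sub (huγ2.sub huγ1) hinner_int
    have E2 : ∫ p, (u p.2 - u p.1) ∂γ = (∫ p, u p.2 ∂γ) - ∫ p, u p.1 ∂γ :=
      integral_sub huγ2 huγ1
    have E3 : ∫ p, ⟪g, p.2 - p.1⟫ ∂γ = ⟪g, ∫ p : E × E, (p.2 - p.1) ∂γ⟫ :=
      integral_inner (hidγ2.sub hidγ1) g
    have e1 : (∫ p : E × E, p.1 ∂γ) = ∫ x, x ∂μ := by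
      rw [← hγ1]
      exact (integral_map measurable_fst.aemeasurable aestronglyMeasurable_id).symm
    have e2 : (∫ p : E × E, p.2 ∂γ) = ∫ x, x ∂ν := by
      rw [← hγ2]
      exact (integral_map measurable_snd.aemeasurable aestronglyMeasurable_id).symm
    have E4 : (∫ p : E × E, (p.2 - p.1) ∂γ) = (0 : E) := by
      rw [integral_sub hidγ2 hidγ1, e1, e2, ← hbar, ← hb, sub_self]
    have E5 : ∫ p, ⟪g, p.2 - p.1⟫ ∂γ = 0 := by rw [E3, E4, inner_zero_right]
    have E6 : (∫ p : E × E, u p.2 ∂γ) = ∫ x, u x ∂ν := trint2 u hu.continuous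
    have E7 : (∫ p : E × E, u p.1 ∂γ) = ∫ x, u x ∂μ := trint1 u hu.continuous
    rw [E1, E2, E5, E6, E7, sub_zero]
  -- Step B : pointwise bound and integral_mono
  set G : E × E → ℝ := fun p =>
    (1 / 2) * (‖p.1 - b‖ * ‖p.1 - p.2‖) + (1 / 2) * (‖p.2 - b‖ * ‖p.1 - p.2‖) with hG
  have hGi : Integrable G γ := (hprod1.const_mul _).add (hprod2.const_mul _)
  have stepB : (∫ p, F p ∂γ) ≤ ∫ p, G p ∂γ := by
    refine integral_mono hFi hGi fun p => ?_
    have h := taylor_abs u hu hl b p.1 p.2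
    have h2 : F p ≤ (‖p.1 - b‖ + ‖p.2 - b‖) / 2 * ‖p.2 - p.1‖ := (le_abs_self _).trans h
    have h3 : ‖p.2 - p.1‖ = ‖p.1 - p.2‖ := norm_sub_rev _ _
    rw [h3] at h2
    calc F p ≤ _ := h2
      _ = G p := by rw [hG]; ring
  -- Step C : Cauchy-Schwarz for each product
  have hpq : (2:ℝ).HolderConjugate 2 := Real.HolderConjugate.two_two
  have hcs : ∀ (s : E × E → ℝ), Continuous s → (∀ p, 0 ≤ s p) →
      Integrable (fun p => s p ^ 2) γ →
      (∫ p, s p * ‖p.1 - p.2‖ ∂γ) ≤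
        Real.sqrt (∫ p, s p ^ 2 ∂γ) * Real.sqrt (∫ p, ‖p.1 - p.2‖ ^ 2 ∂γ) := by
    intro s hs hsnn hsint
    have hmem1 : MemLp s (ENNReal.ofReal 2) γ := by
      rw [(by norm_num : ENNReal.ofReal (2:ℝ) = 2)]
      exact (memLp_two_iff_integrable_sq hs.aestronglyMeasurable).mpr hsint
    have hmem2 : MemLp (fun p : E × E => ‖p.1 - p.2‖) (ENNReal.ofReal 2) γ := by
      rw [(by norm_num : ENNReal.ofReal (2:ℝ) = 2)]
      exact (memLp_two_iff_integrable_sq ct.aestronglyMeasurable).mpr htγ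
    have h := integral_mul_le_Lp_mul_Lq_of_nonneg hpq (ae_of_all _ hsnn)
      (ae_of_all _ fun p => norm_nonneg _) hmem1 hmem2
    have hrw1 : (∫ p, s p ^ (2:ℝ) ∂γ) = ∫ p, s p ^ 2 ∂γ := by
      simp_rw [Real.rpow_two]
    have hrw2 : (∫ p : E × E, ‖p.1 - p.2‖ ^ (2:ℝ) ∂γ) = ∫ p : E × E, ‖p.1 - p.2‖ ^ 2 ∂γ := by
      simp_rw [Real.rpow_two]
    rw [hrw1, hrw2] at h
    calc (∫ p, s p * ‖p.1 - p.2‖ ∂γ)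
        ≤ (∫ p, s p ^ 2 ∂γ) ^ (1 / (2:ℝ)) * (∫ p : E × E, ‖p.1 - p.2‖ ^ 2 ∂γ) ^ (1 / (2:ℝ)) := h
      _ = _ := by
          rw [← Real.sqrt_eq_rpow, ← Real.sqrt_eq_rpow]
  -- final assembly
  have hV1 : (∫ p : E × E, ‖p.1 - b‖ ^ 2 ∂γ) = ∫ x, ‖x - b‖ ^ 2 ∂μ :=
    trint1 _ ((continuous_id.sub continuous_const).norm.pow 2)
  have hV2 : (∫ p : E × E, ‖p.2 - b‖ ^ 2 ∂γ) = ∫ x, ‖x - b‖ ^ 2 ∂ν :=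
    trint2 _ ((continuous_id.sub continuous_const).norm.pow 2)
  have hC : (∫ p : E × E, ‖p.1 - p.2‖ ^ 2 ∂γ)
      = (∫⁻ p, ENNReal.ofReal (‖p.1 - p.2‖ ^ 2) ∂γ).toReal := by
    rw [integral_eq_lintegral_of_nonneg_ae (ae_of_all _ fun p => sq_nonneg _)
      (ct.pow 2).aestronglyMeasurable]
  have hcs1 := hcs _ cs1 (fun p => norm_nonneg _) hsγ
  have hcs2 := hcs _ cs2 (fun p => norm_nonneg _) hs'γ
  have hGint : ∫ p, G p ∂γ = (1 / 2) * (∫ p : E × E, ‖p.1 - b‖ * ‖p.1 - p.2‖ ∂γ)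
      + (1 / 2) * (∫ p : E × E, ‖p.2 - b‖ * ‖p.1 - p.2‖ ∂γ) := by
    have E1 : ∫ p, G p ∂γ = (∫ p : E × E, (1 / 2) * (‖p.1 - b‖ * ‖p.1 - p.2‖) ∂γ)
        + ∫ p : E × E, (1 / 2) * (‖p.2 - b‖ * ‖p.1 - p.2‖) ∂γ :=
      integral_add (hprod1.const_mul _) (hprod2.const_mul _)
    rw [E1, integral_const_mul, integral_const_mul]
  calc (∫ x, u x ∂ν) - ∫ x, u x ∂μ = ∫ p, F p ∂γ := stepA
    _ ≤ ∫ p, G p ∂γ := stepB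
    _ = (1 / 2) * (∫ p : E × E, ‖p.1 - b‖ * ‖p.1 - p.2‖ ∂γ)
        + (1 / 2) * (∫ p : E × E, ‖p.2 - b‖ * ‖p.1 - p.2‖ ∂γ) := hGint
    _ ≤ (1 / 2) * (Real.sqrt (∫ p : E × E, ‖p.1 - b‖ ^ 2 ∂γ)
          * Real.sqrt (∫ p : E × E, ‖p.1 - p.2‖ ^ 2 ∂γ))
        + (1 / 2) * (Real.sqrt (∫ p : E × E, ‖p.2 - b‖ ^ 2 ∂γ)
          * Real.sqrt (∫ p : E × E, ‖p.1 - p.2‖ ^ 2 ∂γ)) := by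
        have h1 := mul_le_mul_of_nonneg_left hcs1 (by norm_num : (0:ℝ) ≤ 1 / 2)
        have h2 := mul_le_mul_of_nonneg_left hcs2 (by norm_num : (0:ℝ) ≤ 1 / 2)
        linarith
    _ = (Real.sqrt (∫ x, ‖x - b‖ ^ 2 ∂μ) + Real.sqrt (∫ x, ‖x - b‖ ^ 2 ∂ν)) / 2
        * Real.sqrt ((∫⁻ p, ENNReal.ofReal (‖p.1 - p.2‖ ^ 2) ∂γ).toReal) := by
        rw [hV1, hV2, hC]; ring

theorem w2sq_ne_top (μ ν : Measure E) [IsProbabilityMeasure μ] [IsProbabilityMeasure ν]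
    (hμ : Integrable (fun x => ‖x‖ ^ 2) μ) (hν : Integrable (fun x => ‖x‖ ^ 2) ν) :
    W2sq μ ν ≠ ⊤ := by
  have hm1 : (μ.prod ν).map Prod.fst = μ := by
    rw [Measure.map_fst_prod]; simp
  have hm2 : (μ.prod ν).map Prod.snd = ν := by
    rw [Measure.map_snd_prod]; simp
  have key : ∀ (ρ : Measure E), IsProbabilityMeasure ρ → Integrable (fun x => ‖x‖ ^ 2) ρ →
      ∫⁻ x, ENNReal.ofReal (2 * ‖x‖ ^ 2) ∂ρ ≠ ⊤ := by
    intro ρ hρp hρ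
    have h2 := (hρ.const_mul 2).hasFiniteIntegral
    rw [hasFiniteIntegral_iff_ofReal (ae_of_all _ fun x => by positivity)] at h2
    exact h2.ne
  have hcost : (∫⁻ p, ENNReal.ofReal (‖p.1 - p.2‖ ^ 2) ∂(μ.prod ν)) ≠ ⊤ := by
    have hb : ∀ p : E × E, ENNReal.ofReal (‖p.1 - p.2‖ ^ 2)
        ≤ ENNReal.ofReal (2 * ‖p.1‖ ^ 2) + ENNReal.ofReal (2 * ‖p.2‖ ^ 2) := by
      intro p
      calc ENNReal.ofReal (‖p.1 - p.2‖ ^ 2)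
          ≤ ENNReal.ofReal (2 * ‖p.1‖ ^ 2 + 2 * ‖p.2‖ ^ 2) := by
            refine ENNReal.ofReal_le_ofReal ?_
            have h := norm_sub_le p.1 p.2
            nlinarith [norm_nonneg p.1, norm_nonneg p.2, norm_nonneg (p.1 - p.2),
              mul_self_le_mul_self (norm_nonneg (p.1 - p.2)) h, sq_nonneg (‖p.1‖ - ‖p.2‖)]
        _ ≤ _ := ENNReal.ofReal_add_le
    have hle := lintegral_mono (μ := μ.prod ν) fun p => hb p
    have hsplit : (∫⁻ p : E × E, (ENNReal.ofReal (2 * ‖p.1‖ ^ 2)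
        + ENNReal.ofReal (2 * ‖p.2‖ ^ 2)) ∂(μ.prod ν)) ≠ ⊤ := by
      rw [lintegral_add_left (by fun_prop : Measurable fun p : E × E => ENNReal.ofReal (2 * ‖p.1‖ ^ 2))]
      have e1 : (∫⁻ p : E × E, ENNReal.ofReal (2 * ‖p.1‖ ^ 2) ∂(μ.prod ν))
          = ∫⁻ x, ENNReal.ofReal (2 * ‖x‖ ^ 2) ∂μ := by
        conv_rhs => rw [← hm1]
        rw [lintegral_map (by fun_prop) measurable_fst]
      have e2 : (∫⁻ p : E × E, ENNReal.ofReal (2 * ‖p.2‖ ^ 2) ∂(μ.prod ν))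
          = ∫⁻ x, ENNReal.ofReal (2 * ‖x‖ ^ 2) ∂ν := by
        conv_rhs => rw [← hm2]
        rw [lintegral_map (by fun_prop) measurable_snd]
      rw [e1, e2]
      exact ENNReal.add_ne_top.mpr ⟨key μ ‹_› hμ, key ν ‹_› hν⟩
    exact fun h => hsplit (eq_top_iff.mpr (h ▸ hle))
  have hle2 : W2sq μ ν ≤ ∫⁻ p, ENNReal.ofReal (‖p.1 - p.2‖ ^ 2) ∂(μ.prod ν) :=
    iInf_le_of_le (μ.prod ν) (iInf_le_of_le hm1 (iInf_le_of_le hm2 le_rfl))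
  exact fun h => hcost (eq_top_iff.mpr (h ▸ hle2))


end auxStmt16

theorem stmt16 (d : ℕ) (μ ν : Measure (EuclideanSpace ℝ (Fin d)))
    [IsProbabilityMeasure μ] [IsProbabilityMeasure ν]
    (hμ : Integrable (fun x => ‖x‖ ^ 2) μ) (hν : Integrable (fun x => ‖x‖ ^ 2) ν)
    (hbar : bary μ = bary ν) :
    Z2 μ ν ≤ ENNReal.ofReal
      ((1 / 2 : ℝ) * (Real.sqrt (var2 μ) + Real.sqrt (var2 ν)) * W2 μ ν) := by
  classical
  rw [Z2]
  refine iSup_le fun u => iSup_le fun hu => iSup_le fun hl => ENNReal.ofReal_le_ofReal ?_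
  have hbar' : (∫ x : EuclideanSpace ℝ (Fin d), x ∂μ) = ∫ x : EuclideanSpace ℝ (Fin d), x ∂ν := hbar
  have hfin : W2sq μ ν ≠ ⊤ := w2sq_ne_top μ ν hμ hν
  set A := Real.sqrt (var2 μ) + Real.sqrt (var2 ν) with hA
  have hA0 : 0 ≤ A := add_nonneg (Real.sqrt_nonneg _) (Real.sqrt_nonneg _)
  set T := (W2sq μ ν).toReal with hT
  have hT0 : 0 ≤ T := ENNReal.toReal_nonneg
  have hW2 : W2 μ ν = Real.sqrt T := rfl
  refine le_of_forall_pos_le_add fun δ hδ => ?_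
  have hden : (0:ℝ) < A / 2 + 1 := by linarith
  set ε := (δ / (A / 2 + 1)) ^ 2 with hε
  have hεpos : 0 < ε := pow_pos (div_pos hδ hden) 2
  have hlt0 : W2sq μ ν < W2sq μ ν + ENNReal.ofReal ε :=
    ENNReal.lt_add_right hfin (ENNReal.ofReal_pos.mpr hεpos).ne'
  have hlt : (⨅ (γ : Measure (EuclideanSpace ℝ (Fin d) × EuclideanSpace ℝ (Fin d))) (_ : γ.map Prod.fst = μ) (_ : γ.map Prod.snd = ν),
      ∫⁻ p, ENNReal.ofReal (‖p.1 - p.2‖ ^ 2) ∂γ) < W2sq μ ν + ENNReal.ofReal ε := hlt0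
  obtain ⟨γ, hγ⟩ := iInf_lt_iff.mp hlt
  obtain ⟨hγ1, hγ'⟩ := iInf_lt_iff.mp hγ
  obtain ⟨hγ2, hγcost⟩ := iInf_lt_iff.mp hγ'
  have hfinγ : (∫⁻ p, ENNReal.ofReal (‖p.1 - p.2‖ ^ 2) ∂γ) ≠ ⊤ := hγcost.ne_top
  have key := core μ ν hμ hν hbar' u hu hl γ hγ1 hγ2 hfinγ
  have hv1 : (∫ x : EuclideanSpace ℝ (Fin d), ‖x - (∫ x : EuclideanSpace ℝ (Fin d), x ∂μ)‖ ^ 2 ∂μ) = var2 μ := by rw [var2, bary]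
  have hv2 : (∫ x : EuclideanSpace ℝ (Fin d), ‖x - (∫ x : EuclideanSpace ℝ (Fin d), x ∂μ)‖ ^ 2 ∂ν) = var2 ν := by
    rw [var2, ← hbar, bary]
  rw [hv1, hv2] at key
  -- bound sqrt of cost
  have h1 : (∫⁻ p, ENNReal.ofReal (‖p.1 - p.2‖ ^ 2) ∂γ).toReal ≤ T + ε := by
    have hy : (W2sq μ ν + ENNReal.ofReal ε) ≠ ⊤ :=
      ENNReal.add_ne_top.mpr ⟨hfin, ENNReal.ofReal_ne_top⟩
    have := ENNReal.toReal_mono hy hγcost.le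
    rwa [ENNReal.toReal_add hfin ENNReal.ofReal_ne_top, ENNReal.toReal_ofReal hεpos.le] at this
  have h2 : Real.sqrt ((∫⁻ p, ENNReal.ofReal (‖p.1 - p.2‖ ^ 2) ∂γ).toReal)
      ≤ Real.sqrt T + Real.sqrt ε := by
    have hTε : T + ε ≤ (Real.sqrt T + Real.sqrt ε) ^ 2 := by
      nlinarith [Real.sq_sqrt hT0, Real.sq_sqrt hεpos.le, Real.sqrt_nonneg T,
        Real.sqrt_nonneg ε, mul_nonneg (Real.sqrt_nonneg T) (Real.sqrt_nonneg ε)]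
    calc Real.sqrt ((∫⁻ p, ENNReal.ofReal (‖p.1 - p.2‖ ^ 2) ∂γ).toReal)
        ≤ Real.sqrt ((Real.sqrt T + Real.sqrt ε) ^ 2) := Real.sqrt_le_sqrt (h1.trans hTε)
      _ = Real.sqrt T + Real.sqrt ε :=
          Real.sqrt_sq (add_nonneg (Real.sqrt_nonneg _) (Real.sqrt_nonneg _))
  have hsqε : Real.sqrt ε = δ / (A / 2 + 1) := Real.sqrt_sq (div_pos hδ hden).le
  have hlast : A / 2 * (δ / (A / 2 + 1)) ≤ δ := by
    have hd : δ / (A / 2 + 1) * (A / 2 + 1) = δ := div_mul_cancel₀ δ hden.ne'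
    nlinarith [div_pos hδ hden, hA0]
  calc (∫ x, u x ∂ν) - ∫ x, u x ∂μ
      ≤ A / 2 * Real.sqrt ((∫⁻ p, ENNReal.ofReal (‖p.1 - p.2‖ ^ 2) ∂γ).toReal) := key
    _ ≤ A / 2 * (Real.sqrt T + Real.sqrt ε) := by
        exact mul_le_mul_of_nonneg_left h2 (by linarith)
    _ = A / 2 * Real.sqrt T + A / 2 * (δ / (A / 2 + 1)) := by rw [hsqε]; ring
    _ ≤ 1 / 2 * A * W2 μ ν + δ := by rw [hW2]; linarith
end

section
/- Let γ ∈ 𝒫₂(ℝ^d × ℝ^d) have marginals μ and ν, let u be C¹ with 1-Lipschitz gradient, and suppose that for all Borel maps Φ, Ψ : ℝ^d → ℝ^d of linear growth one has ∬⟨z̄(x,y) − x, Φ(x)⟩ dγ = 0 and ∬⟨z̄(x,y) − y, Ψ(y)⟩ dγ = 0, where z̄(x,y) = (x+y)/2 + (∇u(y) − ∇u(x))/2. Then ∬ (1/2)(|z̄(x,y)−x|² + |z̄(x,y)−y|²) dγ(x,y) = ∫ (1/2)⟨x, ∇u(x)⟩ d(ν−μ)(x). -/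
open MeasureTheory
open scoped InnerProductSpace

lemma zkey {E : Type*} [NormedAddCommGroup E] [InnerProductSpace ℝ E] (x y gx gy : E)
    (z : E) (hz : z = (1 / 2 : ℝ) • (x + y) + (1 / 2 : ℝ) • (gy - gx)) :
    (1 / 2 : ℝ) * (‖z - x‖ ^ 2 + ‖z - y‖ ^ 2)
      = (- ((1 / 2 : ℝ) * ⟪z - x, x⟫_ℝ) - (1 / 2 : ℝ) * ⟪z - y, y⟫_ℝ)
        + ((1 / 2 : ℝ) * ⟪z - y, gy⟫_ℝ - (1 / 2 : ℝ) * ⟪z - x, gx⟫_ℝ)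
        + ((1 / 2 : ℝ) * ⟪y, gy⟫_ℝ - (1 / 2 : ℝ) * ⟪x, gx⟫_ℝ) := by
  subst hz
  simp only [← real_inner_self_eq_norm_sq, inner_add_left, inner_add_right,
    inner_sub_left, inner_sub_right, real_inner_smul_left, real_inner_smul_right,
    real_inner_comm x y, real_inner_comm x gx, real_inner_comm x gy,
    real_inner_comm y gx, real_inner_comm y gy, real_inner_comm gx gy]
  ring

lemma intaux {d : ℕ} (γ : Measure (EuclideanSpace ℝ (Fin d) × EuclideanSpace ℝ (Fin d)))
    [IsProbabilityMeasure γ]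
    (hmom : Integrable (fun p => ‖p.1‖ ^ 2 + ‖p.2‖ ^ 2) γ)
    (A B : EuclideanSpace ℝ (Fin d) × EuclideanSpace ℝ (Fin d) → EuclideanSpace ℝ (Fin d))
    (hA : Measurable A) (hB : Measurable B) (CA CB : ℝ) (hCA0 : 0 ≤ CA) (hCB0 : 0 ≤ CB)
    (hCA : ∀ p, ‖A p‖ ≤ CA * (1 + ‖p.1‖ + ‖p.2‖))
    (hCB : ∀ p, ‖B p‖ ≤ CB * (1 + ‖p.1‖ + ‖p.2‖)) :
    Integrable (fun p => ⟪A p, B p⟫_ℝ) γ := by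
  apply Integrable.mono'
    (g := fun p => (3 * CA * CB) * (1 + (‖p.1‖ ^ 2 + ‖p.2‖ ^ 2)))
  · exact ((integrable_const (1 : ℝ)).add hmom).const_mul _
  · exact (hA.inner hB).aestronglyMeasurable
  · filter_upwards with p
    have h1 : ‖⟪A p, B p⟫_ℝ‖ ≤ ‖A p‖ * ‖B p‖ := norm_inner_le_norm _ _
    have h2 : ‖A p‖ * ‖B p‖ ≤ (CA * (1 + ‖p.1‖ + ‖p.2‖)) * (CB * (1 + ‖p.1‖ + ‖p.2‖)) := by
      have := norm_nonneg (A p)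
      have := norm_nonneg (B p)
      have h01 : (0:ℝ) ≤ norm p.1 := norm_nonneg _
      have h02 : (0:ℝ) ≤ norm p.2 := norm_nonneg _
      nlinarith [hCA p, hCB p]
    have h3 : (1 + ‖p.1‖ + ‖p.2‖) ^ 2 ≤ 3 * (1 + (‖p.1‖ ^ 2 + ‖p.2‖ ^ 2)) := by
      nlinarith [sq_nonneg (‖p.1‖ - ‖p.2‖), sq_nonneg (1 - ‖p.1‖), sq_nonneg (1 - ‖p.2‖)]
    nlinarith [mul_le_mul_of_nonneg_left h3 (mul_nonneg hCA0 hCB0)]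

/-- The barycentre point `z̄(x,y) = (x+y)/2 + (∇u(y) - ∇u(x))/2`. -/
noncomputable def zbar {E : Type*} [NormedAddCommGroup E] [InnerProductSpace ℝ E]
    [CompleteSpace E] (u : E → ℝ) (x y : E) : E :=
  (1 / 2 : ℝ) • (x + y) + (1 / 2 : ℝ) • (gradient u y - gradient u x)

theorem stmt19 (d : ℕ)
    (γ : Measure (EuclideanSpace ℝ (Fin d) × EuclideanSpace ℝ (Fin d)))
    [IsProbabilityMeasure γ]
    (μ ν : Measure (EuclideanSpace ℝ (Fin d)))
    (hfst : γ.map Prod.fst = μ) (hsnd : γ.map Prod.snd = ν)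
    (hmom : Integrable (fun p => ‖p.1‖ ^ 2 + ‖p.2‖ ^ 2) γ)
    (u : EuclideanSpace ℝ (Fin d) → ℝ)
    (hu : ContDiff ℝ 1 u) (hlip : LipschitzWith 1 (gradient u))
    (hmart1 : ∀ Φ : EuclideanSpace ℝ (Fin d) → EuclideanSpace ℝ (Fin d),
      Measurable Φ → (∃ C : ℝ, ∀ x, ‖Φ x‖ ≤ C * (1 + ‖x‖)) →
      ∫ p, ⟪zbar u p.1 p.2 - p.1, Φ p.1⟫_ℝ ∂γ = 0)
    (hmart2 : ∀ Ψ : EuclideanSpace ℝ (Fin d) → EuclideanSpace ℝ (Fin d),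
      Measurable Ψ → (∃ C : ℝ, ∀ y, ‖Ψ y‖ ≤ C * (1 + ‖y‖)) →
      ∫ p, ⟪zbar u p.1 p.2 - p.2, Ψ p.2⟫_ℝ ∂γ = 0) :
    ∫ p, (1 / 2 : ℝ) * (‖zbar u p.1 p.2 - p.1‖ ^ 2 + ‖zbar u p.1 p.2 - p.2‖ ^ 2) ∂γ
      = (∫ x, (1 / 2 : ℝ) * ⟪x, gradient u x⟫_ℝ ∂ν)
          - (∫ x, (1 / 2 : ℝ) * ⟪x, gradient u x⟫_ℝ ∂μ) := by
  set g := gradient u with hg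
  have hgm : Measurable g := hlip.continuous.measurable
  set C : ℝ := 1 + ‖g 0‖ with hC
  have hC0 : (0:ℝ) ≤ C := by positivity
  have hgg : ∀ x, ‖g x‖ ≤ C * (1 + ‖x‖) := by
    intro x
    have h := hlip.dist_le_mul x 0
    simp only [dist_eq_norm, sub_zero, NNReal.coe_one, one_mul] at h
    have h2 : ‖g x‖ - ‖g 0‖ ≤ ‖g x - g 0‖ := norm_sub_norm_le _ _
    have := norm_nonneg (g 0)
    have := norm_nonneg x
    nlinarith
  -- martingale evaluations
  have h1 : ∫ p, ⟪zbar u p.1 p.2 - p.1, p.1⟫_ℝ ∂γ = 0 := by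
    refine hmart1 id measurable_id ⟨1, fun x => ?_⟩
    simp only [id, one_mul]
    linarith [norm_nonneg x]
  have h2 : ∫ p, ⟪zbar u p.1 p.2 - p.2, p.2⟫_ℝ ∂γ = 0 := by
    refine hmart2 id measurable_id ⟨1, fun x => ?_⟩
    simp only [id, one_mul]
    linarith [norm_nonneg x]
  have h3 : ∫ p, ⟪zbar u p.1 p.2 - p.2, g p.2⟫_ℝ ∂γ = 0 := hmart2 g hgm ⟨C, hgg⟩
  have h4 : ∫ p, ⟪zbar u p.1 p.2 - p.1, g p.1⟫_ℝ ∂γ = 0 := hmart1 g hgm ⟨C, hgg⟩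
  -- measurability and growth of zbar
  have hzm : Measurable (fun p : EuclideanSpace ℝ (Fin d) × EuclideanSpace ℝ (Fin d) =>
      zbar u p.1 p.2) := by
    simp only [zbar]
    exact ((measurable_fst.add measurable_snd).const_smul (1 / 2 : ℝ)).add
      (((hgm.comp measurable_snd).sub (hgm.comp measurable_fst)).const_smul (1 / 2 : ℝ))
  have hzg : ∀ p : EuclideanSpace ℝ (Fin d) × EuclideanSpace ℝ (Fin d),
      ‖zbar u p.1 p.2‖ ≤ (2 * C) * (1 + ‖p.1‖ + ‖p.2‖) := by
    intro p
    have t1 : ‖zbar u p.1 p.2‖ ≤ (1/2) * (‖p.1‖ + ‖p.2‖) + (1/2) * (‖g p.2‖ + ‖g p.1‖) := by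
      calc ‖zbar u p.1 p.2‖
          ≤ ‖(1 / 2 : ℝ) • (p.1 + p.2)‖ + ‖(1 / 2 : ℝ) • (g p.2 - g p.1)‖ := norm_add_le _ _
        _ ≤ (1/2) * (‖p.1‖ + ‖p.2‖) + (1/2) * (‖g p.2‖ + ‖g p.1‖) := by
            rw [norm_smul, norm_smul]
            simp only [Real.norm_eq_abs]
            have := norm_add_le p.1 p.2
            have := norm_sub_le (g p.2) (g p.1)
            rw [abs_of_pos (by norm_num : (0:ℝ) < 1/2)]
            nlinarith
    have := hgg p.1
    have := hgg p.2
    have h01 : (0:ℝ) ≤ ‖p.1‖ := norm_nonneg _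
    have h02 : (0:ℝ) ≤ ‖p.2‖ := norm_nonneg _
    have hC1' : (1:ℝ) ≤ C := by
      have := norm_nonneg (g 0); rw [hC]; linarith
    nlinarith [mul_nonneg (by linarith : (0:ℝ) ≤ 3 * C - 1)
      (by linarith : (0:ℝ) ≤ ‖p.1‖ + ‖p.2‖)]
  -- growth of simple pieces
  have hfstg : ∀ p : EuclideanSpace ℝ (Fin d) × EuclideanSpace ℝ (Fin d),
      ‖p.1‖ ≤ (1:ℝ) * (1 + ‖p.1‖ + ‖p.2‖) := fun p => by
    have := norm_nonneg p.2; linarith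
  have hsndg : ∀ p : EuclideanSpace ℝ (Fin d) × EuclideanSpace ℝ (Fin d),
      ‖p.2‖ ≤ (1:ℝ) * (1 + ‖p.1‖ + ‖p.2‖) := fun p => by
    have := norm_nonneg p.1; linarith
  have hg1 : ∀ p : EuclideanSpace ℝ (Fin d) × EuclideanSpace ℝ (Fin d),
      ‖g p.1‖ ≤ C * (1 + ‖p.1‖ + ‖p.2‖) := fun p => by
    have := hgg p.1; have := norm_nonneg p.2; nlinarith
  have hg2 : ∀ p : EuclideanSpace ℝ (Fin d) × EuclideanSpace ℝ (Fin d),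
      ‖g p.2‖ ≤ C * (1 + ‖p.1‖ + ‖p.2‖) := fun p => by
    have := hgg p.2; have := norm_nonneg p.1; nlinarith
  have hz1 : ∀ p : EuclideanSpace ℝ (Fin d) × EuclideanSpace ℝ (Fin d),
      ‖zbar u p.1 p.2 - p.1‖ ≤ (2 * C + 1) * (1 + ‖p.1‖ + ‖p.2‖) := fun p => by
    have := norm_sub_le (zbar u p.1 p.2) p.1
    have := hzg p; have := hfstg p; nlinarith
  have hz2 : ∀ p : EuclideanSpace ℝ (Fin d) × EuclideanSpace ℝ (Fin d),
      ‖zbar u p.1 p.2 - p.2‖ ≤ (2 * C + 1) * (1 + ‖p.1‖ + ‖p.2‖) := fun p => by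
    have := norm_sub_le (zbar u p.1 p.2) p.2
    have := hzg p; have := hsndg p; nlinarith
  have hzm1 : Measurable (fun p : EuclideanSpace ℝ (Fin d) × EuclideanSpace ℝ (Fin d) =>
      zbar u p.1 p.2 - p.1) := hzm.sub measurable_fst
  have hzm2 : Measurable (fun p : EuclideanSpace ℝ (Fin d) × EuclideanSpace ℝ (Fin d) =>
      zbar u p.1 p.2 - p.2) := hzm.sub measurable_snd
  have hC1 : (0:ℝ) ≤ 2 * C + 1 := by linarith
  -- integrability of the six pieces
  have i1 : Integrable (fun p => ⟪zbar u p.1 p.2 - p.1, p.1⟫_ℝ) γ :=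
    intaux γ hmom _ _ hzm1 measurable_fst _ _ hC1 zero_le_one hz1 hfstg
  have i2 : Integrable (fun p => ⟪zbar u p.1 p.2 - p.2, p.2⟫_ℝ) γ :=
    intaux γ hmom _ _ hzm2 measurable_snd _ _ hC1 zero_le_one hz2 hsndg
  have i3 : Integrable (fun p => ⟪zbar u p.1 p.2 - p.2, g p.2⟫_ℝ) γ :=
    intaux γ hmom _ _ hzm2 (hgm.comp measurable_snd) _ _ hC1 hC0 hz2 hg2
  have i4 : Integrable (fun p => ⟪zbar u p.1 p.2 - p.1, g p.1⟫_ℝ) γ :=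
    intaux γ hmom _ _ hzm1 (hgm.comp measurable_fst) _ _ hC1 hC0 hz1 hg1
  have i5 : Integrable (fun p => ⟪p.2, g p.2⟫_ℝ) γ :=
    intaux γ hmom _ _ measurable_snd (hgm.comp measurable_snd) _ _ zero_le_one hC0 hsndg hg2
  have i6 : Integrable (fun p => ⟪p.1, g p.1⟫_ℝ) γ :=
    intaux γ hmom _ _ measurable_fst (hgm.comp measurable_fst) _ _ zero_le_one hC0 hfstg hg1
  -- marginal identities
  have m2 : ∫ x, (1 / 2 : ℝ) * ⟪x, g x⟫_ℝ ∂ν = ∫ p, (1 / 2 : ℝ) * ⟪p.2, g p.2⟫_ℝ ∂γ := by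
    rw [← hsnd, integral_map measurable_snd.aemeasurable]
    exact ((measurable_id.inner hgm).const_mul _).aestronglyMeasurable
  have m1 : ∫ x, (1 / 2 : ℝ) * ⟪x, g x⟫_ℝ ∂μ = ∫ p, (1 / 2 : ℝ) * ⟪p.1, g p.1⟫_ℝ ∂γ := by
    rw [← hfst, integral_map measurable_fst.aemeasurable]
    exact ((measurable_id.inner hgm).const_mul _).aestronglyMeasurable
  -- pointwise identity
  have key : ∀ p : EuclideanSpace ℝ (Fin d) × EuclideanSpace ℝ (Fin d),
      (1 / 2 : ℝ) * (‖zbar u p.1 p.2 - p.1‖ ^ 2 + ‖zbar u p.1 p.2 - p.2‖ ^ 2)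
        = (- ((1 / 2 : ℝ) * ⟪zbar u p.1 p.2 - p.1, p.1⟫_ℝ)
              - (1 / 2 : ℝ) * ⟪zbar u p.1 p.2 - p.2, p.2⟫_ℝ)
          + ((1 / 2 : ℝ) * ⟪zbar u p.1 p.2 - p.2, g p.2⟫_ℝ
              - (1 / 2 : ℝ) * ⟪zbar u p.1 p.2 - p.1, g p.1⟫_ℝ)
          + ((1 / 2 : ℝ) * ⟪p.2, g p.2⟫_ℝ - (1 / 2 : ℝ) * ⟪p.1, g p.1⟫_ℝ) :=
    fun p => zkey p.1 p.2 (g p.1) (g p.2) _ rfl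
  calc ∫ p, (1 / 2 : ℝ) * (‖zbar u p.1 p.2 - p.1‖ ^ 2 + ‖zbar u p.1 p.2 - p.2‖ ^ 2) ∂γ
      = ∫ p, ((- ((1 / 2 : ℝ) * ⟪zbar u p.1 p.2 - p.1, p.1⟫_ℝ)
              - (1 / 2 : ℝ) * ⟪zbar u p.1 p.2 - p.2, p.2⟫_ℝ)
          + ((1 / 2 : ℝ) * ⟪zbar u p.1 p.2 - p.2, g p.2⟫_ℝ
              - (1 / 2 : ℝ) * ⟪zbar u p.1 p.2 - p.1, g p.1⟫_ℝ)
          + ((1 / 2 : ℝ) * ⟪p.2, g p.2⟫_ℝ - (1 / 2 : ℝ) * ⟪p.1, g p.1⟫_ℝ)) ∂γ :=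
        integral_congr_ae (Filter.Eventually.of_forall key)
    _ = (∫ x, (1 / 2 : ℝ) * ⟪x, g x⟫_ℝ ∂ν) - ∫ x, (1 / 2 : ℝ) * ⟪x, g x⟫_ℝ ∂μ := by
        have j1 : Integrable (fun p => (1 / 2 : ℝ) * ⟪zbar u p.1 p.2 - p.1, p.1⟫_ℝ) γ :=
          i1.const_mul _
        have j2 : Integrable (fun p => (1 / 2 : ℝ) * ⟪zbar u p.1 p.2 - p.2, p.2⟫_ℝ) γ :=
          i2.const_mul _
        have j3 : Integrable (fun p => (1 / 2 : ℝ) * ⟪zbar u p.1 p.2 - p.2, g p.2⟫_ℝ) γ :=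
          i3.const_mul _
        have j4 : Integrable (fun p => (1 / 2 : ℝ) * ⟪zbar u p.1 p.2 - p.1, g p.1⟫_ℝ) γ :=
          i4.const_mul _
        have j5 : Integrable (fun p => (1 / 2 : ℝ) * ⟪p.2, g p.2⟫_ℝ) γ := i5.const_mul _
        have j6 : Integrable (fun p => (1 / 2 : ℝ) * ⟪p.1, g p.1⟫_ℝ) γ := i6.const_mul _
        have eTop : ∫ p, ((- ((1 / 2 : ℝ) * ⟪zbar u p.1 p.2 - p.1, p.1⟫_ℝ)
              - (1 / 2 : ℝ) * ⟪zbar u p.1 p.2 - p.2, p.2⟫_ℝ)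
          + ((1 / 2 : ℝ) * ⟪zbar u p.1 p.2 - p.2, g p.2⟫_ℝ
              - (1 / 2 : ℝ) * ⟪zbar u p.1 p.2 - p.1, g p.1⟫_ℝ)
          + ((1 / 2 : ℝ) * ⟪p.2, g p.2⟫_ℝ - (1 / 2 : ℝ) * ⟪p.1, g p.1⟫_ℝ)) ∂γ
          = (∫ p, ((- ((1 / 2 : ℝ) * ⟪zbar u p.1 p.2 - p.1, p.1⟫_ℝ)
              - (1 / 2 : ℝ) * ⟪zbar u p.1 p.2 - p.2, p.2⟫_ℝ)
          + ((1 / 2 : ℝ) * ⟪zbar u p.1 p.2 - p.2, g p.2⟫_ℝ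
              - (1 / 2 : ℝ) * ⟪zbar u p.1 p.2 - p.1, g p.1⟫_ℝ)) ∂γ)
            + ∫ p, ((1 / 2 : ℝ) * ⟪p.2, g p.2⟫_ℝ - (1 / 2 : ℝ) * ⟪p.1, g p.1⟫_ℝ) ∂γ :=
          integral_add ((j1.neg.sub j2).add (j3.sub j4)) (j5.sub j6)
        have eG : ∫ p, ((- ((1 / 2 : ℝ) * ⟪zbar u p.1 p.2 - p.1, p.1⟫_ℝ)
              - (1 / 2 : ℝ) * ⟪zbar u p.1 p.2 - p.2, p.2⟫_ℝ)
          + ((1 / 2 : ℝ) * ⟪zbar u p.1 p.2 - p.2, g p.2⟫_ℝ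
              - (1 / 2 : ℝ) * ⟪zbar u p.1 p.2 - p.1, g p.1⟫_ℝ)) ∂γ
          = (∫ p, (- ((1 / 2 : ℝ) * ⟪zbar u p.1 p.2 - p.1, p.1⟫_ℝ)
              - (1 / 2 : ℝ) * ⟪zbar u p.1 p.2 - p.2, p.2⟫_ℝ) ∂γ)
            + ∫ p, ((1 / 2 : ℝ) * ⟪zbar u p.1 p.2 - p.2, g p.2⟫_ℝ
              - (1 / 2 : ℝ) * ⟪zbar u p.1 p.2 - p.1, g p.1⟫_ℝ) ∂γ :=
          integral_add (j1.neg.sub j2) (j3.sub j4)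
        have eG1 : ∫ p, (- ((1 / 2 : ℝ) * ⟪zbar u p.1 p.2 - p.1, p.1⟫_ℝ)
              - (1 / 2 : ℝ) * ⟪zbar u p.1 p.2 - p.2, p.2⟫_ℝ) ∂γ
          = (∫ p, - ((1 / 2 : ℝ) * ⟪zbar u p.1 p.2 - p.1, p.1⟫_ℝ) ∂γ)
            - ∫ p, (1 / 2 : ℝ) * ⟪zbar u p.1 p.2 - p.2, p.2⟫_ℝ ∂γ :=
          integral_sub j1.neg j2
        have eG1' : ∫ p, - ((1 / 2 : ℝ) * ⟪zbar u p.1 p.2 - p.1, p.1⟫_ℝ) ∂γ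
          = - ∫ p, (1 / 2 : ℝ) * ⟪zbar u p.1 p.2 - p.1, p.1⟫_ℝ ∂γ := integral_neg _
        have eG2 : ∫ p, ((1 / 2 : ℝ) * ⟪zbar u p.1 p.2 - p.2, g p.2⟫_ℝ
              - (1 / 2 : ℝ) * ⟪zbar u p.1 p.2 - p.1, g p.1⟫_ℝ) ∂γ
          = (∫ p, (1 / 2 : ℝ) * ⟪zbar u p.1 p.2 - p.2, g p.2⟫_ℝ ∂γ)
            - ∫ p, (1 / 2 : ℝ) * ⟪zbar u p.1 p.2 - p.1, g p.1⟫_ℝ ∂γ := integral_sub j3 j4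
        have eH : ∫ p, ((1 / 2 : ℝ) * ⟪p.2, g p.2⟫_ℝ - (1 / 2 : ℝ) * ⟪p.1, g p.1⟫_ℝ) ∂γ
          = (∫ p, (1 / 2 : ℝ) * ⟪p.2, g p.2⟫_ℝ ∂γ)
            - ∫ p, (1 / 2 : ℝ) * ⟪p.1, g p.1⟫_ℝ ∂γ := integral_sub j5 j6
        rw [eTop, eG, eG1, eG1', eG2, eH, m1, m2, integral_const_mul, integral_const_mul,
          integral_const_mul, integral_const_mul, h1, h2, h3, h4]
        ring
end
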